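/- arXiv:1310.4737 — 2 statements merged into one kernel-verified Lean document; each statement's English description precedes it below -/
import Mathlib

section
/- Let G be a finite connected graph and p ∈ [1,∞). Then λ₁(G;ℓ₂,p) = λ₁(G;L_p[0,1],p) = λ₁(G;ℓ_p,p) = λ₁(G;ℝ,p), where ℓ₂ and ℓ_p are the spaces of square-summable and p-summable real sequences, and L_p[0,1] is the Lebesgue space on [0,1]. -/
open scoped ENNReal

structure MultiGraph where
  V : Type
  [fintypeV : Fintype V]
  m : V → V → ℕ
  symm : ∀ v w, m v w = m w v

attribute [instance] MultiGraph.fintypeV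

namespace MultiGraph

def toSimple (G : MultiGraph) : SimpleGraph G.V where
  Adj v w := v ≠ w ∧ 0 < G.m v w
  symm := ⟨by
    intro v w h
    exact ⟨h.1.symm, by rw [G.symm]; exact h.2⟩⟩
  loopless := ⟨fun v h => h.1 rfl⟩

def Connected (G : MultiGraph) : Prop := G.toSimple.Connected

noncomputable def dist (G : MultiGraph) (v w : G.V) : ℕ := G.toSimple.dist v w

noncomputable def diam (G : MultiGraph) : ℕ :=
  Finset.univ.sup fun q : G.V × G.V => G.dist q.1 q.2

def deg (G : MultiGraph) (v : G.V) : ℕ := ∑ w, G.m v w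

noncomputable def maxDeg (G : MultiGraph) : ℕ := Finset.univ.sup fun v => G.deg v

noncomputable def mean (G : MultiGraph) {X : Type*} [NormedAddCommGroup X]
    [NormedSpace ℝ X] (f : G.V → X) : X :=
  (Fintype.card G.V : ℝ)⁻¹ • ∑ v, f v

noncomputable def lam1 (G : MultiGraph) (X : Type*) [NormedAddCommGroup X]
    [NormedSpace ℝ X] (p : ℝ) : ℝ :=
  (1/2) * sInf {r : ℝ | ∃ f : G.V → X, (¬ ∀ v w, f v = f w) ∧
    r = (∑ v, ∑ w, (G.m v w : ℝ) * ‖f w - f v‖ ^ p) / (∑ v, ‖f v - G.mean f‖ ^ p)}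

noncomputable def distortion (G : MultiGraph) (X : Type*) [NormedAddCommGroup X] : ℝ :=
  sInf {c : ℝ | ∃ (f : G.V → X) (L₁ L₂ : ℝ), 0 < L₁ ∧ 0 < L₂ ∧
    (∀ v w, ‖f v - f w‖ ≤ L₁ * (G.dist v w : ℝ)) ∧
    (∀ v w, (G.dist v w : ℝ) ≤ L₂ * ‖f v - f w‖) ∧ c = L₁ * L₂}

end MultiGraph

def IsAnderFamily (G : ℕ → MultiGraph) (X : Type*) [NormedAddCommGroup X]
    [NormedSpace ℝ X] (p : ℝ) : Prop :=
  (∃ D : ℕ, ∀ n, (G n).maxDeg ≤ D) ∧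
  Filter.Tendsto (fun n => (G n).diam) Filter.atTop Filter.atTop ∧
  ∃ ε : ℝ, 0 < ε ∧ ∀ n, ε ≤ (G n).lam1 X p

def SphereEquiv (X Y : Type*) [NormedAddCommGroup X] [NormedAddCommGroup Y] : Prop :=
  ∃ φ : Metric.sphere (0:X) 1 ≃ Metric.sphere (0:Y) 1,
    UniformContinuous φ ∧ UniformContinuous φ.symm
namespace Lam1Proof

open MultiGraph

variable (G : MultiGraph) (p : ℝ)

noncomputable def num {X : Type*} [NormedAddCommGroup X] (f : G.V → X) : ℝ :=
  ∑ v, ∑ w, (G.m v w : ℝ) * ‖f w - f v‖ ^ p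

noncomputable def den {X : Type*} [NormedAddCommGroup X] [NormedSpace ℝ X] (f : G.V → X) : ℝ :=
  ∑ v, ‖f v - G.mean f‖ ^ p

def rset (X : Type*) [NormedAddCommGroup X] [NormedSpace ℝ X] : Set ℝ :=
  {r : ℝ | ∃ f : G.V → X, (¬ ∀ v w, f v = f w) ∧ r = num G p f / den G p f}

lemma lam1_eq (X : Type*) [NormedAddCommGroup X] [NormedSpace ℝ X] :
    G.lam1 X p = (1/2) * sInf (rset G p X) := rfl

variable {X : Type*} [NormedAddCommGroup X] [NormedSpace ℝ X]

lemma num_nonneg (hp : 1 ≤ p) (f : G.V → X) : 0 ≤ num G p f := by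
  refine Finset.sum_nonneg fun v _ => Finset.sum_nonneg fun w _ => ?_
  exact mul_nonneg (Nat.cast_nonneg _) (Real.rpow_nonneg (norm_nonneg _) _)

lemma den_nonneg (f : G.V → X) : 0 ≤ den G p f :=
  Finset.sum_nonneg fun v _ => Real.rpow_nonneg (norm_nonneg _) _

lemma rset_nonneg (hp : 1 ≤ p) : ∀ r ∈ rset G p X, (0:ℝ) ≤ r := by
  rintro r ⟨f, -, rfl⟩
  exact div_nonneg (num_nonneg G p hp f) (den_nonneg G p f)

lemma rset_bddBelow (hp : 1 ≤ p) : BddBelow (rset G p X) :=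
  ⟨0, fun r hr => rset_nonneg G p hp r hr⟩

lemma sInf_rset_nonneg (hp : 1 ≤ p) : 0 ≤ sInf (rset G p X) :=
  Real.sInf_nonneg (rset_nonneg G p hp)

lemma den_pos (hp : 1 ≤ p) {f : G.V → X} (hf : ¬ ∀ v w, f v = f w) :
    0 < den G p f := by
  have hex : ∃ v, f v ≠ G.mean f := by
    by_contra h
    push_neg at h
    exact hf fun v w => (h v).trans (h w).symm
  obtain ⟨v, hv⟩ := hex
  have hpos : 0 < ‖f v - G.mean f‖ ^ p :=
    Real.rpow_pos_of_pos (by simpa [sub_eq_zero] using hv) _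
  refine lt_of_lt_of_le hpos ?_
  exact Finset.single_le_sum (f := fun v => ‖f v - G.mean f‖ ^ p)
    (fun w _ => Real.rpow_nonneg (norm_nonneg _) _) (Finset.mem_univ v)

/-- The real Poincaré inequality, valid for every map (constant or not). -/
lemma real_poincare (hp : 1 ≤ p) (g : G.V → ℝ) :
    sInf (rset G p ℝ) * den G p g ≤ num G p g := by
  by_cases hg : ∀ v w, g v = g w
  · have hmean : ∀ v, g v = G.mean g := by
      intro v
      rcases isEmpty_or_nonempty G.V with h | h
      · exact absurd (Finset.mem_univ v) (by simp)
      · have : ∑ w, g w = (Fintype.card G.V : ℝ) * g v := by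
          rw [Finset.sum_congr rfl fun w _ => hg w v]
          simp [Finset.card_univ, mul_comm]
        have hc : (Fintype.card G.V : ℝ) ≠ 0 := by
          exact_mod_cast Fintype.card_ne_zero
        simp [MultiGraph.mean, this, hc]
    have hden : den G p g = 0 := by
      unfold den
      refine Finset.sum_eq_zero fun v _ => ?_
      rw [← hmean v]
      simp [Real.zero_rpow (by positivity : p ≠ 0)]
    rw [hden, mul_zero]
    exact num_nonneg G p hp g
  · have hd := den_pos G p hp hg
    have hmem : num G p g / den G p g ∈ rset G p ℝ := ⟨g, hg, rfl⟩
    have h := csInf_le (rset_bddBelow G p hp) hmem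
    calc sInf (rset G p ℝ) * den G p g ≤ (num G p g / den G p g) * den G p g := by
          exact mul_le_mul_of_nonneg_right h hd.le
      _ = num G p g := div_mul_cancel₀ _ hd.ne'

/-- If `X` has a unit vector and `V` is nontrivial, the `X`-gap is at most the real gap. -/
lemma sInf_le_real (hp : 1 ≤ p) (hV : ∃ v w : G.V, v ≠ w) {e : X} (he : ‖e‖ = 1) :
    sInf (rset G p X) ≤ sInf (rset G p ℝ) := by
  have he0 : e ≠ 0 := by intro h; rw [h] at he; simp at he
  refine csInf_le_csInf (rset_bddBelow G p hp) ?_ ?_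
  · obtain ⟨v₀, v₁, hvw⟩ := hV
    classical
    refine ⟨_, (fun v => if v = v₀ then (1:ℝ) else 0), fun h => ?_, rfl⟩
    have := h v₀ v₁
    simp only [if_pos rfl, if_neg (Ne.symm hvw)] at this
    exact one_ne_zero this
  · rintro r ⟨g, hg, rfl⟩
    refine ⟨fun v => g v • e, fun h => hg fun v w => ?_, ?_⟩
    · have := h v w
      exact smul_left_injective ℝ he0 this
    · have hmean : G.mean (fun v => g v • e) = (G.mean g) • e := by
        unfold MultiGraph.mean
        rw [← Finset.sum_smul, smul_assoc]
      have hnorm : ∀ x y : ℝ, ‖x • e - y • e‖ = ‖x - y‖ := by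
        intro x y
        rw [← sub_smul, norm_smul, he, mul_one]
      congr 1
      · unfold num
        refine Finset.sum_congr rfl fun v _ => Finset.sum_congr rfl fun w _ => ?_
        rw [hnorm]
      · unfold den
        refine Finset.sum_congr rfl fun v _ => ?_
        rw [hmean, hnorm]

/-- Abstract lower bound criterion. -/
lemma real_le_sInf (hp : 1 ≤ p)
    (h : ∀ f : G.V → X, (¬ ∀ v w, f v = f w) →
      sInf (rset G p ℝ) * den G p f ≤ num G p f)
    (hne : (rset G p X).Nonempty) :
    sInf (rset G p ℝ) ≤ sInf (rset G p X) := by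
  refine le_csInf hne ?_
  rintro r ⟨f, hf, rfl⟩
  have hd := den_pos G p hp hf
  exact (le_div_iff₀ hd).mpr (h f hf)


section Gauss

open MeasureTheory Real

local notation "⟪" x ", " y "⟫" => inner (𝕜 := ℝ) x y

variable {E : Type*} [NormedAddCommGroup E] [InnerProductSpace ℝ E] [FiniteDimensional ℝ E]
  [MeasurableSpace E] [BorelSpace E]
variable {G} {p}


lemma rpow_mul_exp_le (hp : 0 ≤ p) {t : ℝ} (ht : 0 ≤ t) :
    t ^ p * rexp (-(t ^ 2) / 2) ≤ rexp (p ^ 2 / 2) := by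
  rcases le_or_gt t 1 with h1 | h1
  · have h2 : t ^ p ≤ 1 := Real.rpow_le_one ht h1 hp
    have h3 : rexp (-(t ^ 2) / 2) ≤ 1 := Real.exp_le_one_iff.mpr (by nlinarith [sq_nonneg t])
    calc t ^ p * rexp (-(t ^ 2) / 2) ≤ 1 * 1 :=
          mul_le_mul h2 h3 (Real.exp_pos _).le zero_le_one
      _ ≤ rexp (p ^ 2 / 2) := by rw [one_mul]; exact Real.one_le_exp (by positivity)
  · have ht0 : 0 < t := lt_trans zero_lt_one h1
    rw [Real.rpow_def_of_pos ht0, ← Real.exp_add]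
    apply Real.exp_le_exp.mpr
    have hlog : Real.log t ≤ t := (Real.log_le_sub_one_of_pos ht0).trans (by linarith)
    have : p * Real.log t ≤ p * t := mul_le_mul_of_nonneg_left hlog hp
    nlinarith [sq_nonneg (t - p)]

lemma integrable_gauss_half : Integrable (fun ω : E => rexp (-(2⁻¹) * ‖ω‖ ^ 2)) := by
  have h := (GaussianFourier.integrable_cexp_neg_mul_sq_norm_add (V := E) (b := (2⁻¹ : ℂ))
    (by norm_num) 0 (0 : E)).norm
  refine h.congr (Filter.Eventually.of_forall fun ω => ?_)
  simp only [Complex.norm_exp]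
  norm_num
  rw [← Complex.ofReal_pow, Complex.ofReal_re]

lemma integrable_inner_rpow_gauss (hp : 0 ≤ p) (x : E) :
    Integrable (fun ω : E => |⟪x, ω⟫| ^ p * rexp (-‖ω‖ ^ 2)) := by
  have hcont : Continuous (fun ω : E => |⟪x, ω⟫| ^ p * rexp (-‖ω‖ ^ 2)) := by
    have h1 : Continuous fun ω : E => ⟪x, ω⟫ := continuous_const.inner continuous_id
    exact ((Real.continuous_rpow_const hp).comp h1.abs).mul
      ((Real.continuous_exp).comp (continuous_norm.pow 2).neg)
  refine Integrable.mono ((integrable_gauss_half (E := E)).const_mul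
    (‖x‖ ^ p * rexp (p ^ 2 / 2))) hcont.aestronglyMeasurable
    (Filter.Eventually.of_forall fun ω => ?_)
  have hnn : 0 ≤ |⟪x, ω⟫| ^ p * rexp (-‖ω‖ ^ 2) := by positivity
  have hb : 0 ≤ ‖x‖ ^ p * rexp (p ^ 2 / 2) * rexp (-(2⁻¹) * ‖ω‖ ^ 2) := by positivity
  rw [Real.norm_of_nonneg hnn, Real.norm_of_nonneg hb]
  have h1 : |⟪x, ω⟫| ^ p ≤ ‖x‖ ^ p * ‖ω‖ ^ p := by
    rw [← Real.mul_rpow (norm_nonneg _) (norm_nonneg _)]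
    exact Real.rpow_le_rpow (abs_nonneg _) (abs_real_inner_le_norm x ω) hp
  have h2 : rexp (-‖ω‖ ^ 2) = rexp (-(‖ω‖ ^ 2) / 2) * rexp (-(2⁻¹) * ‖ω‖ ^ 2) := by
    rw [← Real.exp_add]; ring_nf
  have h3 : ‖ω‖ ^ p * rexp (-(‖ω‖ ^ 2) / 2) ≤ rexp (p ^ 2 / 2) :=
    rpow_mul_exp_le hp (norm_nonneg ω)
  calc |⟪x, ω⟫| ^ p * rexp (-‖ω‖ ^ 2)
      ≤ (‖x‖ ^ p * ‖ω‖ ^ p) * rexp (-‖ω‖ ^ 2) := by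
        apply mul_le_mul_of_nonneg_right h1 (Real.exp_pos _).le
    _ = ‖x‖ ^ p * (‖ω‖ ^ p * rexp (-(‖ω‖ ^ 2) / 2)) * rexp (-(2⁻¹) * ‖ω‖ ^ 2) := by
        rw [h2]; ring
    _ ≤ ‖x‖ ^ p * rexp (p ^ 2 / 2) * rexp (-(2⁻¹) * ‖ω‖ ^ 2) := by
        apply mul_le_mul_of_nonneg_right _ (Real.exp_pos _).le
        exact mul_le_mul_of_nonneg_left h3 (Real.rpow_nonneg (norm_nonneg _) _)

lemma inner_rpow_gauss_invariant (R : E ≃ₗᵢ[ℝ] E) (y : E) :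
    ∫ ω, |⟪R y, ω⟫| ^ p * rexp (-‖ω‖ ^ 2) = ∫ ω, |⟪y, ω⟫| ^ p * rexp (-‖ω‖ ^ 2) := by
  rw [← R.measurePreserving.integral_comp R.toHomeomorph.measurableEmbedding
    (fun ω => |⟪R y, ω⟫| ^ p * rexp (-‖ω‖ ^ 2))]
  congr 1
  ext ω
  rw [R.inner_map_map, R.norm_map]

lemma inner_rpow_gauss_eq (hp : 0 < p) {u : E} (hu : ‖u‖ = 1) (x : E) :
    ∫ ω, |⟪x, ω⟫| ^ p * rexp (-‖ω‖ ^ 2) =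
      ‖x‖ ^ p * ∫ ω, |⟪u, ω⟫| ^ p * rexp (-‖ω‖ ^ 2) := by
  rcases eq_or_ne x 0 with rfl | hx
  · simp [inner_zero_left, Real.zero_rpow hp.ne', norm_zero]
  · set u' : E := ‖x‖⁻¹ • x with hu'def
    have hu' : ‖u'‖ = 1 := norm_smul_inv_norm hx
    have hxu : x = ‖x‖ • u' := by
      rw [hu'def, smul_smul, mul_inv_cancel₀ (norm_ne_zero_iff.mpr hx), one_smul]
    have key : ∀ ω : E, |⟪x, ω⟫| ^ p = ‖x‖ ^ p * |⟪u', ω⟫| ^ p := by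
      intro ω
      conv_lhs => rw [hxu]
      rw [real_inner_smul_left, abs_mul, abs_of_nonneg (norm_nonneg _),
        Real.mul_rpow (norm_nonneg _) (abs_nonneg _)]
    simp_rw [key, mul_assoc]
    rw [MeasureTheory.integral_const_mul]
    congr 1
    have hR : (Submodule.reflection (ℝ ∙ (u - u'))ᗮ) u = u' :=
      Submodule.reflection_sub (hu.trans hu'.symm)
    rw [← hR, inner_rpow_gauss_invariant]

lemma gauss_const_pos (hp : 0 < p) (hp' : 0 ≤ p) {u : E} (hu : ‖u‖ = 1) :
    0 < ∫ ω, |⟪u, ω⟫| ^ p * rexp (-‖ω‖ ^ 2) := by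
  rw [integral_pos_iff_support_of_nonneg (fun ω => by positivity)
    (integrable_inner_rpow_gauss hp' u)]
  have hsub : {ω : E | ⟪u, ω⟫ ≠ 0} ⊆ Function.support
      (fun ω : E => |⟪u, ω⟫| ^ p * rexp (-‖ω‖ ^ 2)) := by
    intro ω hω
    have : 0 < |⟪u, ω⟫| ^ p := Real.rpow_pos_of_pos (abs_pos.mpr hω) _
    exact (mul_pos this (Real.exp_pos _)).ne'
  have h1 : Continuous fun ω : E => ⟪u, ω⟫ := continuous_const.inner continuous_id
  have hopen : IsOpen {ω : E | ⟪u, ω⟫ ≠ 0} :=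
    isOpen_compl_iff.mpr ((isClosed_singleton (x := (0:ℝ))).preimage h1)
  have hmem : u ∈ {ω : E | ⟪u, ω⟫ ≠ 0} := by
    simp only [Set.mem_setOf_eq, real_inner_self_eq_norm_sq, hu]
    norm_num
  calc (0 : ENNReal) < volume {ω : E | ⟪u, ω⟫ ≠ 0} :=
        hopen.measure_pos volume ⟨u, hmem⟩
    _ ≤ _ := measure_mono hsub


end Gauss

section L2

open MeasureTheory Real

variable {G} {p}


set_option maxHeartbeats 1000000 in
lemma l2_lower (hp : 1 ≤ p) (f : G.V → lp (fun _ : ℕ => ℝ) 2)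
    (hf : ¬ ∀ v w, f v = f w) :
    sInf (rset G p ℝ) * den G p f ≤ num G p f := by
  classical
  have hp0 : 0 < p := lt_of_lt_of_le zero_lt_one hp
  set S : Submodule ℝ (lp (fun _ : ℕ => ℝ) 2) := Submodule.span ℝ (Set.range f) with hS
  haveI : FiniteDimensional ℝ S := FiniteDimensional.span_of_finite ℝ (Set.finite_range f)
  set n := Module.finrank ℝ S with hn
  set B := stdOrthonormalBasis ℝ S with hB
  have hfS : ∀ v, f v ∈ S := fun v => Submodule.subset_span ⟨v, rfl⟩
  have hmS : G.mean f ∈ S :=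
    Submodule.smul_mem _ _ (Submodule.sum_mem _ fun v _ => hfS v)
  set x : G.V → EuclideanSpace ℝ (Fin n) := fun v => B.repr ⟨f v, hfS v⟩ with hx
  have hdiff : ∀ v w, ‖x w - x v‖ = ‖f w - f v‖ := by
    intro v w
    rw [hx, ← map_sub, B.repr.norm_map]
    rfl
  have hmean : G.mean x = B.repr ⟨G.mean f, hmS⟩ := by
    unfold MultiGraph.mean
    rw [← map_sum, ← _root_.map_smul]
    congr 1
    apply Subtype.ext
    push_cast [Submodule.coe_smul, Submodule.coe_sum]
    rfl
  have hden : ∀ v, ‖x v - G.mean x‖ = ‖f v - G.mean f‖ := by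
    intro v
    rw [hmean, hx, ← map_sub, B.repr.norm_map]
    rfl
  -- a unit vector in the Euclidean space
  obtain ⟨v₀, hv₀⟩ := not_forall.mp hf
  obtain ⟨w₀, hw₀⟩ := not_forall.mp hv₀
  have hxne : x v₀ - x w₀ ≠ 0 := by
    intro h
    apply hw₀
    have := hdiff w₀ v₀
    rw [h, norm_zero] at this
    rwa [eq_comm, norm_eq_zero, sub_eq_zero] at this
  set u : EuclideanSpace ℝ (Fin n) := ‖x v₀ - x w₀‖⁻¹ • (x v₀ - x w₀) with hu'
  have hu : ‖u‖ = 1 := norm_smul_inv_norm hxne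
  set C : ℝ := ∫ ω : EuclideanSpace ℝ (Fin n),
    |inner (𝕜 := ℝ) u ω| ^ p * rexp (-‖ω‖ ^ 2) with hC
  have hCpos : 0 < C := gauss_const_pos hp0 hp0.le hu
  have hint : ∀ y : EuclideanSpace ℝ (Fin n),
      ∫ ω, |inner (𝕜 := ℝ) y ω| ^ p * rexp (-‖ω‖ ^ 2) = ‖y‖ ^ p * C :=
    fun y => inner_rpow_gauss_eq hp0 hu y
  -- pointwise functions
  set Nfun : EuclideanSpace ℝ (Fin n) → ℝ := fun ω =>
    ∑ v, ∑ w, (G.m v w : ℝ) *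
      (|inner (𝕜 := ℝ) (x w - x v) ω| ^ p * rexp (-‖ω‖ ^ 2)) with hNfun
  set Dfun : EuclideanSpace ℝ (Fin n) → ℝ := fun ω =>
    ∑ v, |inner (𝕜 := ℝ) (x v - G.mean x) ω| ^ p * rexp (-‖ω‖ ^ 2) with hDfun
  have hNint : Integrable Nfun := by
    refine integrable_finset_sum _ fun v _ => integrable_finset_sum _ fun w _ => ?_
    exact (integrable_inner_rpow_gauss hp0.le _).const_mul _
  have hDint : Integrable Dfun :=
    integrable_finset_sum _ fun v _ => integrable_inner_rpow_gauss hp0.le _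
  have hNval : ∫ ω, Nfun ω = C * num G p f := by
    rw [hNfun]
    rw [integral_finset_sum _ fun v _ => integrable_finset_sum _ fun w _ =>
      (integrable_inner_rpow_gauss hp0.le _).const_mul _]
    unfold num
    rw [Finset.mul_sum]
    refine Finset.sum_congr rfl fun v _ => ?_
    rw [integral_finset_sum _ fun w _ => (integrable_inner_rpow_gauss hp0.le _).const_mul _,
      Finset.mul_sum]
    refine Finset.sum_congr rfl fun w _ => ?_
    rw [MeasureTheory.integral_const_mul, hint, hdiff]
    ring
  have hDval : ∫ ω, Dfun ω = C * den G p f := by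
    rw [hDfun, integral_finset_sum _ fun v _ => integrable_inner_rpow_gauss hp0.le _]
    unfold den
    rw [Finset.mul_sum]
    refine Finset.sum_congr rfl fun v _ => ?_
    rw [hint, hden]
    ring
  have hpoint : ∀ ω, sInf (rset G p ℝ) * Dfun ω ≤ Nfun ω := by
    intro ω
    have hmg : G.mean (fun v => inner (𝕜 := ℝ) (x v) ω) = inner (𝕜 := ℝ) (G.mean x) ω := by
      unfold MultiGraph.mean
      rw [← sum_inner, real_inner_smul_left, smul_eq_mul]
    have hNg : Nfun ω = num G p (fun v => inner (𝕜 := ℝ) (x v) ω) * rexp (-‖ω‖ ^ 2) := by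
      rw [hNfun]
      unfold num
      rw [Finset.sum_mul]
      refine Finset.sum_congr rfl fun v _ => ?_
      rw [Finset.sum_mul]
      refine Finset.sum_congr rfl fun w _ => ?_
      rw [inner_sub_left, Real.norm_eq_abs]
      ring
    have hDg : Dfun ω = den G p (fun v => inner (𝕜 := ℝ) (x v) ω) * rexp (-‖ω‖ ^ 2) := by
      rw [hDfun]
      unfold den
      rw [Finset.sum_mul]
      refine Finset.sum_congr rfl fun v _ => ?_
      rw [hmg, inner_sub_left, Real.norm_eq_abs]
    rw [hNg, hDg, ← mul_assoc]
    exact mul_le_mul_of_nonneg_right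
      (real_poincare G p hp (fun v => inner (𝕜 := ℝ) (x v) ω)) (Real.exp_pos _).le
  have hmono : ∫ ω, sInf (rset G p ℝ) * Dfun ω ≤ ∫ ω, Nfun ω :=
    integral_mono (hDint.const_mul _) hNint hpoint
  rw [MeasureTheory.integral_const_mul, hDval, hNval] at hmono
  have : C * (sInf (rset G p ℝ) * den G p f) ≤ C * num G p f := by
    calc C * (sInf (rset G p ℝ) * den G p f)
        = sInf (rset G p ℝ) * (C * den G p f) := by ring
      _ ≤ C * num G p f := hmono
  exact le_of_mul_le_mul_left this hCpos

end L2

section LpSeq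

variable {G} {p}

set_option maxHeartbeats 800000 in
lemma lpseq_lower (hp : 1 ≤ p) [Fact (1 ≤ ENNReal.ofReal p)]
    (f : G.V → lp (fun _ : ℕ => ℝ) (ENNReal.ofReal p)) :
    sInf (rset G p ℝ) * den G p f ≤ num G p f := by
  have hp0 : 0 < p := lt_of_lt_of_le zero_lt_one hp
  have htR : (ENNReal.ofReal p).toReal = p := ENNReal.toReal_ofReal hp0.le
  have hq : 0 < (ENNReal.ofReal p).toReal := by rw [htR]; exact hp0
  have hnorm : ∀ y : lp (fun _ : ℕ => ℝ) (ENNReal.ofReal p),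
      ‖y‖ ^ p = ∑' i, ‖y i‖ ^ p := by
    intro y
    have := lp.norm_rpow_eq_tsum hq y
    rwa [htR] at this
  have hsummable : ∀ y : lp (fun _ : ℕ => ℝ) (ENNReal.ofReal p),
      Summable (fun i => ‖y i‖ ^ p) := by
    intro y
    have := (lp.memℓp y).summable hq
    rwa [htR] at this
  set g : ℕ → G.V → ℝ := fun i v => f v i with hg
  have hmean : ∀ i, G.mean (g i) = (G.mean f) i := by
    intro i
    unfold MultiGraph.mean
    rw [lp.coeFn_smul, Pi.smul_apply, lp.coeFn_sum]
    simp [hg]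
  have hsub : ∀ (v : G.V) (i : ℕ),
      (f v - G.mean f : lp (fun _ : ℕ => ℝ) (ENNReal.ofReal p)) i
        = g i v - G.mean (g i) := by
    intro v i
    rw [lp.coeFn_sub, Pi.sub_apply, hmean]
  have hsub2 : ∀ (v w : G.V) (i : ℕ),
      (f w - f v : lp (fun _ : ℕ => ℝ) (ENNReal.ofReal p)) i = g i w - g i v := by
    intro v w i
    rw [lp.coeFn_sub, Pi.sub_apply]
  have hSd : ∀ v : G.V, Summable (fun i => ‖g i v - G.mean (g i)‖ ^ p) := by
    intro v
    refine (hsummable (f v - G.mean f)).congr fun i => ?_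
    rw [hsub]
  have hSn : ∀ v w : G.V, Summable (fun i => ‖g i w - g i v‖ ^ p) := by
    intro v w
    refine (hsummable (f w - f v)).congr fun i => ?_
    rw [hsub2]
  have hden : den G p f = ∑' i, den G p (g i) := by
    have h1 : ∀ v, ‖f v - G.mean f‖ ^ p = ∑' i, ‖g i v - G.mean (g i)‖ ^ p := by
      intro v
      rw [hnorm (f v - G.mean f)]
      exact tsum_congr fun i => by rw [hsub]
    calc den G p f = ∑ v, ∑' i, ‖g i v - G.mean (g i)‖ ^ p :=
          Finset.sum_congr rfl fun v _ => h1 v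
      _ = ∑' i, ∑ v, ‖g i v - G.mean (g i)‖ ^ p := (Summable.tsum_finsetSum (fun v _ => hSd v)).symm
      _ = ∑' i, den G p (g i) := rfl
  have hnum : num G p f = ∑' i, num G p (g i) := by
    have h1 : ∀ v w, (G.m v w : ℝ) * ‖f w - f v‖ ^ p
        = ∑' i, (G.m v w : ℝ) * ‖g i w - g i v‖ ^ p := by
      intro v w
      rw [hnorm (f w - f v), tsum_mul_left]
      congr 1
    calc num G p f
        = ∑ v, ∑ w, ∑' i, (G.m v w : ℝ) * ‖g i w - g i v‖ ^ p :=
          Finset.sum_congr rfl fun v _ => Finset.sum_congr rfl fun w _ => h1 v w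
      _ = ∑ v, ∑' i, ∑ w, (G.m v w : ℝ) * ‖g i w - g i v‖ ^ p :=
          Finset.sum_congr rfl fun v _ =>
            (Summable.tsum_finsetSum (fun w _ => (hSn v w).mul_left _)).symm
      _ = ∑' i, ∑ v, ∑ w, (G.m v w : ℝ) * ‖g i w - g i v‖ ^ p :=
          (Summable.tsum_finsetSum (fun v _ => summable_sum fun w _ => (hSn v w).mul_left _)).symm
      _ = ∑' i, num G p (g i) := rfl
  rw [hden, hnum, ← tsum_mul_left]
  refine Summable.tsum_le_tsum (fun i => real_poincare G p hp (g i))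
    (((summable_sum (fun v (_ : v ∈ Finset.univ) => hSd v)).congr
      (fun i => rfl)).mul_left _)
    (summable_sum fun v _ => summable_sum fun w _ => (hSn v w).mul_left _)

end LpSeq

section LpIcc

open MeasureTheory

variable {G} {p}

set_option maxHeartbeats 1000000 in
lemma lpmeasure_lower {α : Type*} [MeasurableSpace α] {μ : Measure α} (hp : 1 ≤ p)
    {q : ℝ≥0∞} [Fact (1 ≤ q)] (hqdef : q = ENNReal.ofReal p)
    (f : G.V → MeasureTheory.Lp ℝ q μ) :
    sInf (rset G p ℝ) * den G p f ≤ num G p f := by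
  classical
  have hp0 : 0 < p := lt_of_lt_of_le zero_lt_one hp
  have hq0 : q ≠ 0 := by
    rw [hqdef, Ne, ENNReal.ofReal_eq_zero]
    exact not_le.mpr hp0
  have hqt : q ≠ ∞ := by rw [hqdef]; exact ENNReal.ofReal_ne_top
  have htR : q.toReal = p := by rw [hqdef]; exact ENNReal.toReal_ofReal hp0.le
  have hnorm : ∀ F : Lp ℝ q μ, ‖F‖ ^ p = ∫ a, ‖F a‖ ^ p ∂μ := by
    intro F
    have h1 := (Lp.memLp F).eLpNorm_eq_integral_rpow_norm hq0 hqt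
    have h2 : (0:ℝ) ≤ ∫ a, ‖F a‖ ^ q.toReal ∂μ :=
      integral_nonneg fun a => Real.rpow_nonneg (norm_nonneg _) _
    rw [Lp.norm_def, h1, ENNReal.toReal_ofReal (Real.rpow_nonneg h2 _), htR]
    rw [htR] at h2
    exact Real.rpow_inv_rpow h2 hp0.ne'
  have hint : ∀ F : Lp ℝ q μ, Integrable (fun a => ‖F a‖ ^ p) μ := by
    intro F
    have := (Lp.memLp F).integrable_norm_rpow hq0 hqt
    rwa [htR] at this
  have h1ae : ∀ᵐ a ∂μ, ∀ v w : G.V,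
      ((f w - f v : Lp ℝ q μ)) a = f w a - f v a := by
    rw [ae_all_iff]
    intro v
    rw [ae_all_iff]
    intro w
    filter_upwards [Lp.coeFn_sub (f w) (f v)] with a ha
    rw [ha, Pi.sub_apply]
  have h2sum : ∀ s : Finset G.V, ∀ᵐ a ∂μ,
      ((∑ v ∈ s, f v : Lp ℝ q μ)) a = ∑ v ∈ s, f v a := by
    intro s
    induction s using Finset.induction_on with
    | empty =>
      filter_upwards [Lp.coeFn_zero (E := ℝ) (p := q) (μ := μ)] with a ha
      simpa using ha
    | @insert x s hx ih =>
      filter_upwards [Lp.coeFn_add (f x) (∑ v ∈ s, f v), ih] with a ha hia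
      rw [Finset.sum_insert hx, Finset.sum_insert hx, ha, Pi.add_apply, hia]
  have h3ae : ∀ᵐ a ∂μ,
      ((G.mean f : Lp ℝ q μ)) a = (Fintype.card G.V : ℝ)⁻¹ * ∑ v, f v a := by
    filter_upwards [Lp.coeFn_smul ((Fintype.card G.V : ℝ)⁻¹)
      (∑ v, f v : Lp ℝ q μ), h2sum Finset.univ] with a ha h2
    show (((Fintype.card G.V : ℝ)⁻¹ • (∑ v, f v : Lp ℝ q μ) : Lp ℝ q μ)) a = _
    rw [ha, Pi.smul_apply, smul_eq_mul, h2]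
  have h2ae : ∀ᵐ a ∂μ, ∀ v : G.V,
      ((f v - G.mean f : Lp ℝ q μ)) a = f v a - ((G.mean f : Lp ℝ q μ)) a := by
    rw [ae_all_iff]
    intro v
    filter_upwards [Lp.coeFn_sub (f v) (G.mean f)] with a ha
    rw [ha, Pi.sub_apply]
  set g : α → G.V → ℝ := fun a v => f v a with hgdef
  set Nfun : α → ℝ := fun a =>
    ∑ v, ∑ w, (G.m v w : ℝ) * ‖((f w - f v : Lp ℝ q μ)) a‖ ^ p with hNfun
  set Dfun : α → ℝ := fun a =>
    ∑ v, ‖((f v - G.mean f : Lp ℝ q μ)) a‖ ^ p with hDfun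
  have hNint : Integrable Nfun μ :=
    integrable_finset_sum _ fun v _ =>
      integrable_finset_sum _ fun w _ => (hint _).const_mul _
  have hDint : Integrable Dfun μ := integrable_finset_sum _ fun v _ => hint _
  have hNval : ∫ a, Nfun a ∂μ = num G p f := by
    rw [hNfun, integral_finset_sum _ fun v _ =>
      integrable_finset_sum _ fun w _ => (hint _).const_mul _]
    unfold num
    refine Finset.sum_congr rfl fun v _ => ?_
    rw [integral_finset_sum _ fun w _ => (hint _).const_mul _]
    refine Finset.sum_congr rfl fun w _ => ?_
    rw [integral_const_mul, ← hnorm]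
  have hDval : ∫ a, Dfun a ∂μ = den G p f := by
    rw [hDfun, integral_finset_sum _ fun v _ => hint _]
    unfold den
    refine Finset.sum_congr rfl fun v _ => ?_
    rw [← hnorm]
  have hpt : ∀ᵐ a ∂μ, sInf (rset G p ℝ) * Dfun a ≤ Nfun a := by
    filter_upwards [h1ae, h2ae, h3ae] with a h1 h2 h3
    have hmg : G.mean (g a) = ((G.mean f : Lp ℝ q μ)) a := by
      rw [h3]
      unfold MultiGraph.mean
      simp [hgdef, smul_eq_mul]
    have hN : Nfun a = num G p (g a) := by
      rw [hNfun]
      unfold num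
      refine Finset.sum_congr rfl fun v _ => Finset.sum_congr rfl fun w _ => ?_
      rw [h1 v w]
    have hD : Dfun a = den G p (g a) := by
      rw [hDfun]
      unfold den
      refine Finset.sum_congr rfl fun v _ => ?_
      rw [h2 v, hmg]
    rw [hN, hD]
    exact real_poincare G p hp (g a)
  have hfin := integral_mono_ae (hDint.const_mul _) hNint hpt
  rw [integral_const_mul, hNval, hDval] at hfin
  exact hfin

end LpIcc

section Final

variable {G} {p}

lemma rset_nonempty {X : Type*} [NormedAddCommGroup X] [NormedSpace ℝ X]
    (hV : ∃ v w : G.V, v ≠ w) {e : X} (he : ‖e‖ = 1) :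
    (rset G p X).Nonempty := by
  classical
  obtain ⟨v₀, v₁, hne⟩ := hV
  refine ⟨_, fun v => if v = v₀ then e else 0, fun h => ?_, rfl⟩
  have := h v₀ v₁
  simp only [if_pos rfl, if_neg (Ne.symm hne), if_true, eq_self_iff_true] at this
  simp only [this, norm_zero] at he
  exact zero_ne_one he

lemma lam1_subsingleton (h : ∀ v w : G.V, v = w)
    (X : Type*) [NormedAddCommGroup X] [NormedSpace ℝ X] :
    G.lam1 X p = 0 := by
  rw [lam1_eq]
  have : rset G p X = ∅ := by
    rw [Set.eq_empty_iff_forall_notMem]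
    rintro r ⟨f, hf, -⟩
    exact hf fun v w => congrArg f (h v w)
  rw [this, Real.sInf_empty, mul_zero]

lemma lam1_eq_real {X : Type*} [NormedAddCommGroup X] [NormedSpace ℝ X]
    (hp : 1 ≤ p) (hV : ∃ v w : G.V, v ≠ w) {e : X} (he : ‖e‖ = 1)
    (hlow : ∀ f : G.V → X, (¬ ∀ v w, f v = f w) →
      sInf (rset G p ℝ) * den G p f ≤ num G p f) :
    G.lam1 X p = G.lam1 ℝ p := by
  rw [lam1_eq, lam1_eq]
  congr 1
  apply le_antisymm (sInf_le_real G p hp hV he)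
  exact real_le_sInf G p hp hlow (rset_nonempty hV he)

end Final

end Lam1Proof

theorem lam1_ell2_Lp_ellp_real
    (G : MultiGraph) (hG : G.Connected) (p : ℝ) (hp : 1 ≤ p)
    [Fact (1 ≤ ENNReal.ofReal p)] :
    G.lam1 (lp (fun _ : ℕ => ℝ) 2) p =
      G.lam1 (MeasureTheory.Lp ℝ (ENNReal.ofReal p)
        (MeasureTheory.volume : MeasureTheory.Measure (Set.Icc (0:ℝ) 1))) p ∧
    G.lam1 (MeasureTheory.Lp ℝ (ENNReal.ofReal p)
        (MeasureTheory.volume : MeasureTheory.Measure (Set.Icc (0:ℝ) 1))) p =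
      G.lam1 (lp (fun _ : ℕ => ℝ) (ENNReal.ofReal p)) p ∧
    G.lam1 (lp (fun _ : ℕ => ℝ) (ENNReal.ofReal p)) p = G.lam1 ℝ p := by
  classical
  have hp0 : 0 < p := lt_of_lt_of_le zero_lt_one hp
  by_cases hV : ∃ v w : G.V, v ≠ w
  · have htR : (ENNReal.ofReal p).toReal = p := ENNReal.toReal_ofReal hp0.le
    have hqR : 0 < (ENNReal.ofReal p).toReal := by rw [htR]; exact hp0
    have he2 : ‖lp.single (E := fun _ : ℕ => ℝ) 2 0 (1:ℝ)‖ = 1 := by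
      have := lp.norm_single (E := fun _ : ℕ => ℝ) (p := 2) (by norm_num) 0 (1:ℝ)
      simpa using this
    have heq : ‖lp.single (E := fun _ : ℕ => ℝ) (ENNReal.ofReal p) 0 (1:ℝ)‖ = 1 := by
      have := lp.norm_single (E := fun _ : ℕ => ℝ) (p := ENNReal.ofReal p) (ENNReal.ofReal_pos.mpr hp0)
        0 (1:ℝ)
      simpa using this
    have hq0 : (ENNReal.ofReal p) ≠ 0 := by
      rw [Ne, ENNReal.ofReal_eq_zero]; exact not_le.mpr hp0
    have hμ : (MeasureTheory.volume :
        MeasureTheory.Measure (Set.Icc (0:ℝ) 1)) Set.univ = 1 := by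
      rw [MeasureTheory.Measure.Subtype.volume_univ measurableSet_Icc.nullMeasurableSet,
        Real.volume_Icc]
      norm_num
    haveI : MeasureTheory.IsProbabilityMeasure
        (MeasureTheory.volume : MeasureTheory.Measure (Set.Icc (0:ℝ) 1)) := ⟨hμ⟩
    have heL : ‖MeasureTheory.Lp.const (ENNReal.ofReal p)
        (MeasureTheory.volume : MeasureTheory.Measure (Set.Icc (0:ℝ) 1)) (1:ℝ)‖ = 1 := by
      rw [MeasureTheory.Lp.norm_const' _ _ _ hq0 ENNReal.ofReal_ne_top, MeasureTheory.measureReal_def, hμ]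
      simp
    have h1 := Lam1Proof.lam1_eq_real (G := G) hp hV he2
      (fun f hf => Lam1Proof.l2_lower hp f hf)
    have h2 := Lam1Proof.lam1_eq_real (G := G) hp hV heL
      (fun f _ => Lam1Proof.lpmeasure_lower hp rfl f)
    have h3 := Lam1Proof.lam1_eq_real (G := G) hp hV heq
      (fun f _ => Lam1Proof.lpseq_lower hp f)
    exact ⟨h1.trans h2.symm, h2.trans h3.symm, h3⟩
  · push_neg at hV
    refine ⟨?_, ?_, ?_⟩ <;>
      rw [Lam1Proof.lam1_subsingleton hV _, Lam1Proof.lam1_subsingleton hV _]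
end

section
/- Let {G_n} be a family of (X,p)-anders for a real Banach space X and p ∈ [1,∞). Then there is a constant c > 0 with c_X(G_n) ≥ c·diam(G_n) for all n. If moreover X is infinite-dimensional, then there are constants c, C > 0 with c·diam(G_n) ≤ c_X(G_n) ≤ C·diam(G_n) for all n. -/
open scoped ENNReal

/-! ### Auxiliary development -/

namespace AndersAux

open Finset

variable {X : Type*} [NormedAddCommGroup X] [NormedSpace ℝ X]

/-- The set appearing in `lam1` is bounded below by `0`. -/
lemma lam1_set_bddBelow (G : MultiGraph) (p : ℝ) :
    BddBelow {r : ℝ | ∃ f : G.V → X, (¬ ∀ v w, f v = f w) ∧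
      r = (∑ v, ∑ w, (G.m v w : ℝ) * ‖f w - f v‖ ^ p) / (∑ v, ‖f v - G.mean f‖ ^ p)} := by
  refine ⟨0, fun r hr => ?_⟩
  obtain ⟨g, -, rfl⟩ := hr
  apply div_nonneg
  · exact Finset.sum_nonneg fun v _ => Finset.sum_nonneg fun w _ =>
      mul_nonneg (Nat.cast_nonneg _) (Real.rpow_nonneg (norm_nonneg _) p)
  · exact Finset.sum_nonneg fun v _ => Real.rpow_nonneg (norm_nonneg _) p

/-- Basic Poincaré inequality coming from `ε ≤ lam1`. -/
lemma poincare (G : MultiGraph) (p : ℝ) {ε : ℝ}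
    (hlam : ε ≤ G.lam1 X p)
    (f : G.V → X) (hf : ¬ ∀ v w, f v = f w) :
    2 * ε * (∑ v, ‖f v - G.mean f‖ ^ p) ≤ ∑ v, ∑ w, (G.m v w : ℝ) * ‖f w - f v‖ ^ p := by
  set T := ∑ v, ‖f v - G.mean f‖ ^ p with hTdef
  set N := ∑ v, ∑ w, (G.m v w : ℝ) * ‖f w - f v‖ ^ p with hNdef
  have hT0 : 0 < T := by
    obtain ⟨v, hv⟩ : ∃ v, f v ≠ G.mean f := by
      by_contra h
      push_neg at h
      exact hf fun v w => by rw [h v, h w]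
    have h1 : 0 < ‖f v - G.mean f‖ ^ p :=
      Real.rpow_pos_of_pos (norm_pos_iff.2 (sub_ne_zero.2 hv)) p
    exact lt_of_lt_of_le h1 <|
      Finset.single_le_sum (f := fun v => ‖f v - G.mean f‖ ^ p)
        (fun i _ => Real.rpow_nonneg (norm_nonneg _) p) (mem_univ v)
  have hle : ε ≤ (1/2) * (N / T) := by
    refine hlam.trans ?_
    unfold MultiGraph.lam1
    have hmem : N / T ∈ {r : ℝ | ∃ f : G.V → X, (¬ ∀ v w, f v = f w) ∧
        r = (∑ v, ∑ w, (G.m v w : ℝ) * ‖f w - f v‖ ^ p) / (∑ v, ‖f v - G.mean f‖ ^ p)} :=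
      ⟨f, hf, rfl⟩
    have := csInf_le (lam1_set_bddBelow (X := X) G p) hmem
    linarith
  have h2 : ε * T ≤ 1/2 * (N/T) * T := mul_le_mul_of_nonneg_right hle hT0.le
  have h3 : 1/2 * (N/T) * T = 1/2 * N := by
    field_simp
  rw [h3] at h2
  linarith

/-! ### Balls in the graph metric -/

noncomputable def Bal (G : MultiGraph) (v : G.V) (r : ℕ) : Finset G.V :=
  Finset.univ.filter fun u => G.dist v u ≤ r

lemma mem_Bal {G : MultiGraph} {v u : G.V} {r : ℕ} : u ∈ Bal G v r ↔ G.dist v u ≤ r := by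
  simp [Bal]

lemma Bal_mono {G : MultiGraph} {v : G.V} {r s : ℕ} (h : r ≤ s) : Bal G v r ⊆ Bal G v s :=
  fun u hu => mem_Bal.2 ((mem_Bal.1 hu).trans h)

lemma self_mem_Bal {G : MultiGraph} {v : G.V} {r : ℕ} : v ∈ Bal G v r :=
  mem_Bal.2 (by simp [MultiGraph.dist, SimpleGraph.dist_self])

lemma exists_pred (G : MultiGraph) (hc : G.Connected) {v u : G.V} {r : ℕ}
    (h : G.dist v u = r + 1) :
    ∃ w, G.toSimple.Adj w u ∧ G.dist v w = r := by
  obtain ⟨pw, hpw⟩ := SimpleGraph.Connected.exists_walk_length_eq_dist hc u v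
  have hvu : u ≠ v := by
    intro he
    rw [he] at h
    have : G.toSimple.dist v v = r + 1 := h
    rw [SimpleGraph.dist_self] at this
    omega
  obtain ⟨w, hadj, q, rfl⟩ := SimpleGraph.Walk.exists_eq_cons_of_ne hvu pw
  have hlen : q.length = r := by
    rw [SimpleGraph.Walk.length_cons] at hpw
    have h2 : G.toSimple.dist u v = r + 1 := by
      rw [SimpleGraph.dist_comm]; exact h
    omega
  refine ⟨w, hadj.symm, le_antisymm ?_ ?_⟩
  · have := SimpleGraph.dist_le q.reverse
    simpa [MultiGraph.dist, SimpleGraph.Walk.length_reverse, hlen] using this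
  · have htri : G.toSimple.dist v u ≤ G.toSimple.dist v w + G.toSimple.dist w u :=
      SimpleGraph.Connected.dist_triangle hc
    have hd1 : G.toSimple.dist w u = 1 :=
      SimpleGraph.dist_eq_one_iff_adj.2 hadj.symm
    have h3 : G.toSimple.dist v u = r + 1 := h
    show r ≤ G.toSimple.dist v w
    omega

noncomputable def Nbrs (G : MultiGraph) (w : G.V) : Finset G.V :=
  Finset.univ.filter fun u => 0 < G.m w u

lemma card_Nbrs_le_deg (G : MultiGraph) (w : G.V) : (Nbrs G w).card ≤ G.deg w := by
  calc (Nbrs G w).card = ∑ _u ∈ Nbrs G w, 1 := (Finset.card_eq_sum_ones _)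
    _ ≤ ∑ u ∈ Nbrs G w, G.m w u := Finset.sum_le_sum fun u hu => by
        simp only [Nbrs, Finset.mem_filter] at hu; omega
    _ ≤ ∑ u, G.m w u := Finset.sum_le_sum_of_subset (Finset.filter_subset _ _)
    _ = G.deg w := rfl

lemma card_Bal_succ_le (G : MultiGraph) (hc : G.Connected) {D : ℕ}
    (hD : ∀ u, G.deg u ≤ D) (v : G.V) (r : ℕ) :
    (Bal G v (r+1)).card ≤ (D + 1) * (Bal G v r).card := by
  classical
  set φ : G.V → G.V := fun u =>
    if h : G.dist v u = r + 1 then Classical.choose (exists_pred G hc h) else u with hφ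
  refine Finset.card_le_mul_card_image_of_maps_to (f := φ) ?_ (D+1) ?_
  · intro a ha
    by_cases h : G.dist v a = r + 1
    · have spec := Classical.choose_spec (exists_pred G hc h)
      simp only [hφ, dif_pos h]
      exact mem_Bal.2 spec.2.le
    · have h' : G.dist v a ≤ r := by have := mem_Bal.1 ha; omega
      simp only [hφ, dif_neg h]
      exact mem_Bal.2 h'
  · intro b _
    have hsub : (Bal G v (r+1)).filter (fun a => φ a = b) ⊆ insert b (Nbrs G b) := by
      intro a ha
      rw [Finset.mem_filter] at ha
      obtain ⟨_, ha2⟩ := ha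
      by_cases h : G.dist v a = r + 1
      · have spec := Classical.choose_spec (exists_pred G hc h)
        rw [hφ] at ha2
        simp only [dif_pos h] at ha2
        refine Finset.mem_insert_of_mem ?_
        have hadj : G.toSimple.Adj b a := ha2 ▸ spec.1
        simp only [Nbrs, Finset.mem_filter]
        exact ⟨Finset.mem_univ _, (show b ≠ a ∧ 0 < G.m b a from hadj).2⟩
      · rw [hφ] at ha2
        simp only [dif_neg h] at ha2
        exact ha2 ▸ Finset.mem_insert_self _ _
    calc ((Bal G v (r+1)).filter (fun a => φ a = b)).card
        ≤ (insert b (Nbrs G b)).card := Finset.card_le_card hsub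
      _ ≤ (Nbrs G b).card + 1 := Finset.card_insert_le _ _
      _ ≤ D + 1 := by have := (card_Nbrs_le_deg G b).trans (hD b); omega

lemma card_Bal_le (G : MultiGraph) (hc : G.Connected) {D : ℕ}
    (hD : ∀ u, G.deg u ≤ D) (v : G.V) : ∀ r, (Bal G v r).card ≤ (D + 1) ^ r := by
  intro r
  induction r with
  | zero =>
    have : Bal G v 0 ⊆ {v} := by
      intro u hu
      have h0 : G.dist v u = 0 := Nat.le_zero.1 (mem_Bal.1 hu)
      have : v = u := (SimpleGraph.Connected.dist_eq_zero_iff hc).1 h0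
      simp [this.symm]
    simpa using Finset.card_le_card this
  | succ r ih =>
    calc (Bal G v (r+1)).card ≤ (D+1) * (Bal G v r).card := card_Bal_succ_le G hc hD v r
      _ ≤ (D+1) * (D+1)^r := Nat.mul_le_mul_left _ ih
      _ = (D+1)^(r+1) := (pow_succ' _ _).symm

open Classical in
lemma indicator_sum_eq (G : MultiGraph) (S : Finset G.V) :
    (∑ u, (if u ∈ S then (1:ℝ) else 0)) = S.card := by
  rw [Finset.sum_ite_mem, Finset.univ_inter, Finset.sum_const, nsmul_eq_mul, mul_one]

set_option maxHeartbeats 2000000 in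
lemma ball_growth (G : MultiGraph) (p : ℝ) (hp : 1 ≤ p) {ε : ℝ} (hε : 0 < ε)
    (hlam : ε ≤ G.lam1 X p) (hc : G.Connected)
    {D : ℕ} (hD : ∀ u, G.deg u ≤ D) (hD1 : 1 ≤ D)
    {x₀ : X} (hx : ‖x₀‖ = 1)
    {v : G.V} {r : ℕ} (hball : 2 * (Bal G v r).card ≤ Fintype.card G.V) :
    ((Bal G v r).card : ℝ) * (1 + ε / (2 ^ p * D)) ≤ ((Bal G v (r+1)).card : ℝ) := by
  classical
  have hp0 : (0:ℝ) < p := lt_of_lt_of_le one_pos hp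
  have hp0' : p ≠ 0 := hp0.ne'
  set B := Bal G v r with hB
  set B' := Bal G v (r+1) with hB'
  have hsubBB : B ⊆ B' := Bal_mono (Nat.le_succ r)
  set n : ℝ := (Fintype.card G.V : ℝ) with hn
  set b : ℝ := (B.card : ℝ) with hbdef
  set b' : ℝ := (B'.card : ℝ) with hb'def
  have hcardpos : 0 < B.card := Finset.card_pos.2 ⟨v, self_mem_Bal⟩
  have hb0 : 0 < b := by rw [hbdef]; exact_mod_cast hcardpos
  have hn0 : 0 < n := by
    have h : 0 < Fintype.card G.V := Fintype.card_pos_iff.2 ⟨v⟩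
    rw [hn]; exact_mod_cast h
  have h2b : 2 * b ≤ n := by rw [hbdef, hn]; exact_mod_cast hball
  -- the test function
  set f : G.V → X := fun u => if u ∈ B then x₀ else 0 with hf
  have hx0 : x₀ ≠ 0 := by
    intro h; rw [h, norm_zero] at hx; norm_num at hx
  -- f is not constant
  obtain ⟨u₀, hu₀⟩ : ∃ u, u ∉ B := by
    by_contra h
    push_neg at h
    have : Finset.univ ⊆ B := fun u _ => h u
    have hcard := Finset.card_le_card this
    rw [Finset.card_univ] at hcard
    omega
  have hfnc : ¬ ∀ a c, f a = f c := by
    intro h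
    have := h v u₀
    simp only [hf, if_pos (self_mem_Bal : v ∈ B), if_neg hu₀] at this
    have hvB : v ∈ B := self_mem_Bal
    exact hx0 (by simpa [hvB] using this)
  -- the mean
  have hsumf : ∑ u, f u = (B.card : ℕ) • x₀ := by
    simp only [hf]
    rw [Finset.sum_ite_mem, Finset.univ_inter, Finset.sum_const]
  have hmean : G.mean f = (b / n) • x₀ := by
    unfold MultiGraph.mean
    rw [hsumf, ← Nat.cast_smul_eq_nsmul ℝ, smul_smul, ← hbdef, ← hn]
    rw [inv_mul_eq_div]
  set t : ℝ := b / n with ht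
  have ht12 : t ≤ 1/2 := by
    rw [ht, div_le_iff₀ hn0]
    linarith
  have ht0 : 0 < t := div_pos hb0 hn0
  -- lower bound for the denominator
  set T := ∑ u, ‖f u - G.mean f‖ ^ p with hT
  have hTlower : b * (1/2) ^ p ≤ T := by
    have hterm : ∀ u ∈ B, (1/2 : ℝ) ^ p ≤ ‖f u - G.mean f‖ ^ p := by
      intro u hu
      have hfu : f u = x₀ := by simp only [hf, if_pos hu]
      have : f u - G.mean f = (1 - t) • x₀ := by
        rw [hfu, hmean, sub_smul, one_smul]
      rw [this, norm_smul, hx, mul_one, Real.norm_eq_abs, abs_of_nonneg (by linarith)]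
      exact Real.rpow_le_rpow (by norm_num) (by linarith) hp0.le
    calc b * (1/2:ℝ)^p = B.card • ((1/2:ℝ)^p) := by
          rw [nsmul_eq_mul, mul_comm]
      _ ≤ ∑ u ∈ B, ‖f u - G.mean f‖ ^ p := Finset.card_nsmul_le_sum _ _ _ hterm
      _ ≤ T := Finset.sum_le_sum_of_subset_of_nonneg (Finset.subset_univ _)
          (fun i _ _ => Real.rpow_nonneg (norm_nonneg _) p)
  -- upper bound for the numerator
  set χ : G.V → ℝ := fun z => if z ∈ B' \ B then 1 else 0 with hχ
  have hχ0 : ∀ z, 0 ≤ χ z := by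
    intro z; simp only [hχ]; split <;> norm_num
  have hkey : ∀ u w, (G.m u w : ℝ) * ‖f w - f u‖ ^ p ≤ (G.m u w : ℝ) * (χ w + χ u) := by
    intro u w
    rcases Nat.eq_zero_or_pos (G.m u w) with hm | hm
    · simp [hm]
    by_cases hu : u ∈ B <;> by_cases hw : w ∈ B
    · have : f w - f u = 0 := by simp [hf, if_pos hu, if_pos hw]
      rw [this, norm_zero, Real.zero_rpow hp0', mul_zero]
      exact mul_nonneg (Nat.cast_nonneg _) (by positivity)
    · -- u ∈ B, w ∉ B
      have hne : u ≠ w := fun he => hw (he ▸ hu)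
      have hadj : G.toSimple.Adj u w := (⟨hne, hm⟩ : u ≠ w ∧ 0 < G.m u w)
      have hwB' : w ∈ B' := by
        rw [hB', mem_Bal]
        have h1 : G.toSimple.dist v w ≤ G.toSimple.dist v u + G.toSimple.dist u w :=
          SimpleGraph.Connected.dist_triangle hc
        have h2 : G.toSimple.dist u w = 1 := SimpleGraph.dist_eq_one_iff_adj.2 hadj
        have h3 : G.toSimple.dist v u ≤ r := mem_Bal.1 hu
        show G.toSimple.dist v w ≤ r + 1
        omega
      have hχw : χ w = 1 := by
        simp only [hχ, if_pos (Finset.mem_sdiff.2 ⟨hwB', hw⟩)]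
      have hnorm : ‖f w - f u‖ = 1 := by
        simp [hf, if_pos hu, if_neg hw, hx]
      rw [hnorm, Real.one_rpow, hχw]
      have := hχ0 u
      have : (1:ℝ) ≤ 1 + χ u := by linarith
      exact mul_le_mul_of_nonneg_left this (Nat.cast_nonneg _)
    · -- u ∉ B, w ∈ B
      have hne : u ≠ w := fun he => hu (he ▸ hw)
      have hadj : G.toSimple.Adj u w := (⟨hne, hm⟩ : u ≠ w ∧ 0 < G.m u w)
      have huB' : u ∈ B' := by
        rw [hB', mem_Bal]
        have h1 : G.toSimple.dist v u ≤ G.toSimple.dist v w + G.toSimple.dist w u :=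
          SimpleGraph.Connected.dist_triangle hc
        have h2 : G.toSimple.dist w u = 1 := SimpleGraph.dist_eq_one_iff_adj.2 hadj.symm
        have h3 : G.toSimple.dist v w ≤ r := mem_Bal.1 hw
        show G.toSimple.dist v u ≤ r + 1
        omega
      have hχu : χ u = 1 := by
        simp only [hχ, if_pos (Finset.mem_sdiff.2 ⟨huB', hu⟩)]
      have hnorm : ‖f w - f u‖ = 1 := by
        simp [hf, if_pos hw, if_neg hu, hx]
      rw [hnorm, Real.one_rpow, hχu]
      have := hχ0 w
      have : (1:ℝ) ≤ χ w + 1 := by linarith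
      exact mul_le_mul_of_nonneg_left this (Nat.cast_nonneg _)
    · have : f w - f u = 0 := by simp [hf, if_neg hu, if_neg hw]
      rw [this, norm_zero, Real.zero_rpow hp0', mul_zero]
      exact mul_nonneg (Nat.cast_nonneg _) (by positivity)
  have hdegsum : ∀ w, (∑ u, (G.m u w : ℝ)) = (G.deg w : ℝ) := by
    intro w
    rw [show (G.deg w : ℝ) = ((∑ u, G.m w u : ℕ) : ℝ) from rfl, Nat.cast_sum]
    exact Finset.sum_congr rfl fun u _ => by rw [G.symm]
  have hcard_sdiff : ((B' \ B).card : ℝ) = b' - b := by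
    rw [Finset.card_sdiff_of_subset hsubBB, Nat.cast_sub (Finset.card_le_card hsubBB)]
  have hNupper : (∑ u, ∑ w, (G.m u w : ℝ) * ‖f w - f u‖ ^ p) ≤ 2 * D * (b' - b) := by
    have step1 : (∑ u, ∑ w, (G.m u w : ℝ) * ‖f w - f u‖ ^ p) ≤
        ∑ u, ∑ w, (G.m u w : ℝ) * (χ w + χ u) :=
      Finset.sum_le_sum fun u _ => Finset.sum_le_sum fun w _ => hkey u w
    have step2 : (∑ u, ∑ w, (G.m u w : ℝ) * (χ w + χ u)) =
        (∑ u, ∑ w, (G.m u w : ℝ) * χ w) + (∑ u, ∑ w, (G.m u w : ℝ) * χ u) := by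
      simp only [mul_add, Finset.sum_add_distrib]
    have hA : (∑ u, ∑ w, (G.m u w : ℝ) * χ w) ≤ D * (b' - b) := by
      rw [Finset.sum_comm]
      have : ∀ w, (∑ u, (G.m u w : ℝ) * χ w) = (G.deg w : ℝ) * χ w := by
        intro w
        rw [← Finset.sum_mul, hdegsum]
      rw [Finset.sum_congr rfl fun w _ => this w]
      calc (∑ w, (G.deg w : ℝ) * χ w) ≤ ∑ w, (D : ℝ) * χ w :=
            Finset.sum_le_sum fun w _ => mul_le_mul_of_nonneg_right
              (by exact_mod_cast hD w) (hχ0 w)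
        _ = (D:ℝ) * ∑ w, χ w := by rw [Finset.mul_sum]
        _ = (D:ℝ) * ((B' \ B).card : ℝ) := by
              have hχsum : (∑ w, χ w) = ((B' \ B).card : ℝ) := by
                simp only [hχ]; exact indicator_sum_eq G _
              rw [hχsum]
        _ = D * (b' - b) := by rw [hcard_sdiff]
    have hBsum : (∑ u, ∑ w, (G.m u w : ℝ) * χ u) ≤ D * (b' - b) := by
      have : ∀ u, (∑ w, (G.m u w : ℝ) * χ u) = (G.deg u : ℝ) * χ u := by
        intro u
        rw [← Finset.sum_mul]
        congr 1
        rw [show (G.deg u : ℝ) = ((∑ w, G.m u w : ℕ) : ℝ) from rfl, Nat.cast_sum]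
      rw [Finset.sum_congr rfl fun u _ => this u]
      calc (∑ u, (G.deg u : ℝ) * χ u) ≤ ∑ u, (D : ℝ) * χ u :=
            Finset.sum_le_sum fun u _ => mul_le_mul_of_nonneg_right
              (by exact_mod_cast hD u) (hχ0 u)
        _ = (D:ℝ) * ∑ u, χ u := by rw [Finset.mul_sum]
        _ = (D:ℝ) * ((B' \ B).card : ℝ) := by
              have hχsum : (∑ u, χ u) = ((B' \ B).card : ℝ) := by
                simp only [hχ]; exact indicator_sum_eq G _
              rw [hχsum]
        _ = D * (b' - b) := by rw [hcard_sdiff]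
    calc (∑ u, ∑ w, (G.m u w : ℝ) * ‖f w - f u‖ ^ p) ≤ _ := step1
      _ = _ := step2
      _ ≤ D * (b' - b) + D * (b' - b) := add_le_add hA hBsum
      _ = 2 * D * (b' - b) := by ring
  -- put everything together
  have hpoin := poincare G p hlam f hfnc
  have hq0 : (0:ℝ) < 2 ^ p := Real.rpow_pos_of_pos two_pos p
  have hD0 : (0:ℝ) < (D:ℝ) := by exact_mod_cast hD1
  have hhalf : (1/2 : ℝ) ^ p = (2 ^ p)⁻¹ := by
    rw [one_div, Real.inv_rpow (by norm_num)]
  have hchain : 2 * ε * (b * (2 ^ p)⁻¹) ≤ 2 * D * (b' - b) := by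
    calc 2 * ε * (b * (2 ^ p)⁻¹) = 2 * ε * (b * (1/2)^p) := by rw [hhalf]
      _ ≤ 2 * ε * T := by
          apply mul_le_mul_of_nonneg_left hTlower
          positivity
      _ ≤ _ := hpoin
      _ ≤ 2 * D * (b' - b) := hNupper
  -- conclude
  have hfinal : b * (ε / (2 ^ p * D)) ≤ b' - b := by
    have h5 : b * (ε / (2 ^ p * D)) = (ε * (b * (2 ^ p)⁻¹)) / D := by
      field_simp
    rw [h5, div_le_iff₀ hD0]
    nlinarith [hchain]
  nlinarith [hfinal]

lemma dist_le_diam (G : MultiGraph) (u w : G.V) : G.dist u w ≤ G.diam :=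
  Finset.le_sup (f := fun q : G.V × G.V => G.dist q.1 q.2) (Finset.mem_univ (u, w))

set_option maxHeartbeats 2000000 in
lemma diam_bound (G : MultiGraph) (p : ℝ) (hp : 1 ≤ p) {ε : ℝ} (hε : 0 < ε)
    (hlam : ε ≤ G.lam1 X p) (hc : G.Connected)
    {D : ℕ} (hD : ∀ u, G.deg u ≤ D) (hD1 : 1 ≤ D)
    {x₀ : X} (hx : ‖x₀‖ = 1) (hn2 : 2 ≤ Fintype.card G.V) :
    (1 + ε / (2 ^ p * D)) ^ G.diam ≤ (Fintype.card G.V : ℝ) ^ 2 := by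
  classical
  set δ : ℝ := ε / (2 ^ p * D) with hδ
  have hq0 : (0:ℝ) < 2 ^ p := Real.rpow_pos_of_pos two_pos p
  have hD0 : (0:ℝ) < (D:ℝ) := by exact_mod_cast hD1
  have hδ0 : 0 < δ := div_pos hε (by positivity)
  have h1δ : (1:ℝ) ≤ 1 + δ := by linarith
  set n : ℕ := Fintype.card G.V with hn
  have hnV : Nonempty G.V := Fintype.card_pos_iff.1 (by omega)
  have hex : ∀ u : G.V, ∃ r, n < 2 * (Bal G u r).card := by
    intro u
    refine ⟨G.diam, ?_⟩
    have : Bal G u G.diam = Finset.univ := by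
      apply Finset.eq_univ_of_forall
      intro w
      exact mem_Bal.2 (dist_le_diam G u w)
    rw [this, Finset.card_univ, ← hn]
    omega
  set R : G.V → ℕ := fun u => Nat.find (hex u) with hR
  have hRspec : ∀ u, n < 2 * (Bal G u (R u)).card := fun u => Nat.find_spec (hex u)
  have hgrowth : ∀ u, ∀ r, r ≤ R u → (1 + δ) ^ r ≤ ((Bal G u r).card : ℝ) := by
    intro u r
    induction r with
    | zero =>
      intro _
      have : 0 < (Bal G u 0).card := Finset.card_pos.2 ⟨u, self_mem_Bal⟩
      rw [pow_zero]
      exact_mod_cast this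
    | succ r ih =>
      intro hr
      have hrR : r < R u := Nat.lt_of_succ_le hr
      have hnot := Nat.find_min (hex u) hrR
      push_neg at hnot
      have hstep := ball_growth G p hp hε hlam hc hD hD1 hx (v := u) (r := r) hnot
      calc (1 + δ) ^ (r+1) = (1 + δ) ^ r * (1 + δ) := pow_succ _ _
        _ ≤ ((Bal G u r).card : ℝ) * (1 + δ) :=
            mul_le_mul_of_nonneg_right (ih hrR.le) (by linarith)
        _ ≤ _ := hstep
  have hRn : ∀ u, (1 + δ) ^ (R u) ≤ (n : ℝ) := by
    intro u
    refine (hgrowth u (R u) le_rfl).trans ?_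
    have : (Bal G u (R u)).card ≤ n := by
      rw [hn]
      exact (Finset.card_le_card (Finset.subset_univ _)).trans (by rw [Finset.card_univ])
    exact_mod_cast this
  -- realize the diameter
  obtain ⟨q, -, hq⟩ := Finset.exists_mem_eq_sup (Finset.univ : Finset (G.V × G.V))
    Finset.univ_nonempty (fun q : G.V × G.V => G.dist q.1 q.2)
  set u := q.1
  set w := q.2
  have hdiam : G.diam = G.dist u w := hq
  -- the two balls intersect
  have hinter : ((Bal G u (R u)) ∩ (Bal G w (R w))).Nonempty := by
    rw [← Finset.card_pos]
    have h1 := hRspec u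
    have h2 := hRspec w
    have hcup : ((Bal G u (R u)) ∪ (Bal G w (R w))).card ≤ n := by
      rw [hn]
      exact (Finset.card_le_card (Finset.subset_univ _)).trans (by rw [Finset.card_univ])
    have := Finset.card_union_add_card_inter (Bal G u (R u)) (Bal G w (R w))
    omega
  obtain ⟨z, hz⟩ := hinter
  rw [Finset.mem_inter] at hz
  have hdle : G.dist u w ≤ R u + R w := by
    have h1 : G.toSimple.dist u w ≤ G.toSimple.dist u z + G.toSimple.dist z w :=
      SimpleGraph.Connected.dist_triangle hc
    have h2 : G.toSimple.dist u z ≤ R u := mem_Bal.1 hz.1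
    have h3 : G.toSimple.dist z w ≤ R w := by
      have h4 : G.toSimple.dist w z ≤ R w := mem_Bal.1 hz.2
      have hcomm : G.toSimple.dist z w = G.toSimple.dist w z := SimpleGraph.dist_comm
      omega
    show G.toSimple.dist u w ≤ R u + R w
    omega
  calc (1 + δ) ^ G.diam = (1 + δ) ^ G.dist u w := by rw [hdiam]
    _ ≤ (1 + δ) ^ (R u + R w) := pow_le_pow_right₀ h1δ hdle
    _ = (1 + δ) ^ (R u) * (1 + δ) ^ (R w) := pow_add _ _ _
    _ ≤ (n : ℝ) * (n : ℝ) := by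
        have hp1 := hRn u
        have hp2 := hRn w
        have hpos : (0:ℝ) ≤ (1 + δ) ^ (R w) := by positivity
        nlinarith
    _ = ((n : ℝ)) ^ 2 := by ring

noncomputable def Cconst (p ε : ℝ) (D : ℕ) : ℝ :=
  (ε / (2 ^ (p+1) * D)) ^ (1/p) *
    (Real.log (1 + ε / (2 ^ p * D)) / (4 * Real.log (D + 1)))

lemma Cconst_pos {p ε : ℝ} {D : ℕ} (hp : 1 ≤ p) (hε : 0 < ε) (hD1 : 1 ≤ D) :
    0 < Cconst p ε D := by
  have hD0 : (0:ℝ) < (D:ℝ) := by exact_mod_cast hD1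
  have hq0 : (0:ℝ) < 2 ^ p := Real.rpow_pos_of_pos two_pos p
  have hq1 : (0:ℝ) < 2 ^ (p+1) := Real.rpow_pos_of_pos two_pos (p+1)
  have h1 : 0 < (ε / (2 ^ (p+1) * D)) ^ (1/p) :=
    Real.rpow_pos_of_pos (div_pos hε (by positivity)) _
  have h2 : 0 < Real.log (1 + ε / (2 ^ p * D)) := by
    apply Real.log_pos
    have : 0 < ε / (2 ^ p * D) := div_pos hε (by positivity)
    linarith
  have h3 : 0 < Real.log ((D:ℝ) + 1) := by
    apply Real.log_pos
    have : (1:ℝ) ≤ (D:ℝ) := by exact_mod_cast hD1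
    linarith
  exact mul_pos h1 (div_pos h2 (by positivity))

set_option maxHeartbeats 2000000 in
lemma key_lower (G : MultiGraph) (p : ℝ) (hp : 1 ≤ p) {ε : ℝ} (hε : 0 < ε)
    (hlam : ε ≤ G.lam1 X p) (hc : G.Connected)
    {D : ℕ} (hD : ∀ u, G.deg u ≤ D) (hD1 : 1 ≤ D)
    {x₀ : X} (hx : ‖x₀‖ = 1) (hn2 : 2 ≤ Fintype.card G.V)
    {f : G.V → X} {L₁ L₂ : ℝ} (hL₁ : 0 < L₁) (hL₂ : 0 < L₂)
    (hf1 : ∀ v w, ‖f v - f w‖ ≤ L₁ * (G.dist v w : ℝ))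
    (hf2 : ∀ v w, (G.dist v w : ℝ) ≤ L₂ * ‖f v - f w‖) :
    Cconst p ε D * (G.diam : ℝ) ≤ L₁ * L₂ := by
  classical
  have hp0 : (0:ℝ) < p := lt_of_lt_of_le one_pos hp
  have hp0' : p ≠ 0 := hp0.ne'
  have hD0 : (0:ℝ) < (D:ℝ) := by exact_mod_cast hD1
  have hq0 : (0:ℝ) < 2 ^ p := Real.rpow_pos_of_pos two_pos p
  have hq1 : (0:ℝ) < (2:ℝ) ^ (p+1) := Real.rpow_pos_of_pos two_pos (p+1)
  have h2p1 : (2:ℝ) ^ (p+1) = 2 ^ p * 2 := by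
    rw [Real.rpow_add two_pos, Real.rpow_one]
  set n : ℕ := Fintype.card G.V with hn
  set nR : ℝ := (n : ℝ) with hnR
  have hnR0 : (0:ℝ) < nR := by rw [hnR]; exact_mod_cast (by omega : 0 < n)
  -- choose the radius r₁
  have hexr : ∃ r, n < 2 * (D+1)^(r+1) := by
    refine ⟨n, ?_⟩
    have h1 : n < 2 ^ n := Nat.lt_two_pow_self
    have h2 : (2:ℕ) ^ n ≤ 2 ^ (n+1) := Nat.pow_le_pow_right (by omega) (by omega)
    have h3 : (2:ℕ) ^ (n+1) ≤ (D+1) ^ (n+1) := Nat.pow_le_pow_left (by omega) _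
    omega
  set r₁ : ℕ := Nat.find hexr with hr₁def
  have hr₁a : n < 2 * (D+1)^(r₁+1) := Nat.find_spec hexr
  have hr₁b : 2 * (D+1)^r₁ ≤ n := by
    rcases Nat.eq_zero_or_pos r₁ with h0 | hpos
    · rw [h0]; simpa using hn2
    · have hlt : r₁ - 1 < r₁ := by omega
      have hmin := Nat.find_min hexr hlt
      have heq : r₁ - 1 + 1 = r₁ := by omega
      rw [heq] at hmin
      omega
  -- many vertices are far from any given vertex
  have hfar : ∀ v : G.V, nR / 2 * (((r₁ : ℝ) + 1) ^ p) ≤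
      ∑ w, ((G.dist v w : ℝ)) ^ p := by
    intro v
    set O : Finset G.V := Finset.univ \ Bal G v r₁ with hO
    have hcardO : (n : ℝ) / 2 ≤ (O.card : ℝ) := by
      have h1 : (Bal G v r₁).card ≤ (D+1)^r₁ := card_Bal_le G hc hD v r₁
      have h2 : O.card = n - (Bal G v r₁).card := by
        rw [hO, Finset.card_sdiff_of_subset (Finset.subset_univ _), Finset.card_univ, ← hn]
      have h3 : (Bal G v r₁).card ≤ n := by
        have := Finset.card_le_card (Finset.subset_univ (Bal G v r₁))
        rwa [Finset.card_univ, ← hn] at this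
      have : 2 * O.card ≥ n := by omega
      have hcast : (n:ℝ) ≤ 2 * (O.card : ℝ) := by exact_mod_cast this
      linarith
    have hterm : ∀ w ∈ O, ((r₁ : ℝ) + 1) ^ p ≤ ((G.dist v w : ℝ)) ^ p := by
      intro w hw
      rw [hO, Finset.mem_sdiff] at hw
      have hnot : ¬ (G.dist v w ≤ r₁) := fun h => hw.2 (mem_Bal.2 h)
      have hge : r₁ + 1 ≤ G.dist v w := by omega
      have hgeR : ((r₁ : ℝ) + 1) ≤ (G.dist v w : ℝ) := by exact_mod_cast hge
      exact Real.rpow_le_rpow (by positivity) hgeR hp0.le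
    calc nR / 2 * (((r₁ : ℝ) + 1) ^ p) ≤ (O.card : ℝ) * (((r₁ : ℝ) + 1) ^ p) := by
          apply mul_le_mul_of_nonneg_right _ (by positivity)
          rw [hnR]; exact hcardO
      _ = O.card • (((r₁ : ℝ) + 1) ^ p) := by rw [nsmul_eq_mul]
      _ ≤ ∑ w ∈ O, ((G.dist v w : ℝ)) ^ p := Finset.card_nsmul_le_sum _ _ _ hterm
      _ ≤ ∑ w, ((G.dist v w : ℝ)) ^ p := Finset.sum_le_sum_of_subset_of_nonneg
          (Finset.subset_univ _) (fun w _ _ => Real.rpow_nonneg (Nat.cast_nonneg _) p)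
  -- f is not constant
  obtain ⟨v₀, w₀, hvw₀⟩ := Fintype.exists_pair_of_one_lt_card (by omega : 1 < Fintype.card G.V)
  have hfnc : ¬ ∀ v w, f v = f w := by
    intro h
    have hd : (1 : ℝ) ≤ (G.dist v₀ w₀ : ℝ) := by
      have := SimpleGraph.Connected.pos_dist_of_ne (hc) hvw₀
      exact_mod_cast this
    have := hf2 v₀ w₀
    rw [h v₀ w₀, sub_self, norm_zero, mul_zero] at this
    linarith
  -- Poincaré
  set T := ∑ v, ‖f v - G.mean f‖ ^ p with hT
  set N := ∑ v, ∑ w, (G.m v w : ℝ) * ‖f w - f v‖ ^ p with hN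
  have hpoin : 2 * ε * T ≤ N := poincare G p hlam f hfnc
  have hT0 : 0 ≤ T := Finset.sum_nonneg fun v _ => Real.rpow_nonneg (norm_nonneg _) p
  -- numerator bound
  have hNle : N ≤ L₁ ^ p * (nR * D) := by
    have hterm : ∀ v w, (G.m v w : ℝ) * ‖f w - f v‖ ^ p ≤ (G.m v w : ℝ) * L₁ ^ p := by
      intro v w
      rcases Nat.eq_zero_or_pos (G.m v w) with hm | hm
      · simp [hm]
      by_cases hvw : v = w
      · subst hvw
        rw [sub_self, norm_zero, Real.zero_rpow hp0', mul_zero]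
        positivity
      · have hadj : G.toSimple.Adj v w := (⟨hvw, hm⟩ : v ≠ w ∧ 0 < G.m v w)
        have hd1 : G.dist v w = 1 := SimpleGraph.dist_eq_one_iff_adj.2 hadj
        have hb : ‖f w - f v‖ ≤ L₁ := by
          have := hf1 v w
          rw [hd1] at this
          rw [norm_sub_rev]
          simpa using this
        exact mul_le_mul_of_nonneg_left
          (Real.rpow_le_rpow (norm_nonneg _) hb hp0.le) (Nat.cast_nonneg _)
    calc N ≤ ∑ v, ∑ w, (G.m v w : ℝ) * L₁ ^ p :=
          Finset.sum_le_sum fun v _ => Finset.sum_le_sum fun w _ => hterm v w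
      _ = ∑ v, (G.deg v : ℝ) * L₁ ^ p := by
          refine Finset.sum_congr rfl fun v _ => ?_
          rw [← Finset.sum_mul]
          congr 1
          rw [show (G.deg v : ℝ) = ((∑ w, G.m v w : ℕ) : ℝ) from rfl, Nat.cast_sum]
      _ ≤ ∑ _v : G.V, (D : ℝ) * L₁ ^ p := by
          refine Finset.sum_le_sum fun v _ => ?_
          apply mul_le_mul_of_nonneg_right _ (by positivity)
          exact_mod_cast hD v
      _ = nR * ((D : ℝ) * L₁ ^ p) := by
          rw [Finset.sum_const, Finset.card_univ, nsmul_eq_mul, ← hn, ← hnR]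
      _ = L₁ ^ p * (nR * D) := by ring
  -- distance sum bound via L₂ and T
  have hSle : (∑ v, ∑ w, ((G.dist v w : ℝ)) ^ p) ≤ L₂ ^ p * (2 ^ p * (2 * nR * T)) := by
    have hterm1 : ∀ v w, ((G.dist v w : ℝ)) ^ p ≤ L₂ ^ p * ‖f v - f w‖ ^ p := by
      intro v w
      have h := hf2 v w
      have := Real.rpow_le_rpow (Nat.cast_nonneg _) h hp0.le
      rwa [Real.mul_rpow hL₂.le (norm_nonneg _)] at this
    have hterm2 : ∀ v w, ‖f v - f w‖ ^ p ≤
        2 ^ p * (‖f v - G.mean f‖ ^ p + ‖f w - G.mean f‖ ^ p) := by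
      intro v w
      set a := ‖f v - G.mean f‖
      set b := ‖f w - G.mean f‖
      have ha : 0 ≤ a := norm_nonneg _
      have hb : 0 ≤ b := norm_nonneg _
      have h1 : ‖f v - f w‖ ≤ a + b := by
        have he : f v - f w = (f v - G.mean f) - (f w - G.mean f) := by abel
        rw [he]
        exact (norm_sub_le _ _)
      have h2 : a + b ≤ 2 * max a b := by
        rcases le_total a b with h | h
        · rw [max_eq_right h]; linarith
        · rw [max_eq_left h]; linarith
      have h3 : ‖f v - f w‖ ^ p ≤ (2 * max a b) ^ p :=
        Real.rpow_le_rpow (norm_nonneg _) (h1.trans h2) hp0.le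
      have h4 : (2 * max a b : ℝ) ^ p = 2 ^ p * (max a b) ^ p :=
        Real.mul_rpow (by norm_num) (le_max_of_le_left ha)
      have h5 : (max a b) ^ p ≤ a ^ p + b ^ p := by
        rcases le_total a b with h | h
        · rw [max_eq_right h]
          have : 0 ≤ a ^ p := Real.rpow_nonneg ha p
          linarith
        · rw [max_eq_left h]
          have : 0 ≤ b ^ p := Real.rpow_nonneg hb p
          linarith
      calc ‖f v - f w‖ ^ p ≤ 2 ^ p * (max a b) ^ p := by rw [← h4]; exact h3
        _ ≤ 2 ^ p * (a ^ p + b ^ p) := mul_le_mul_of_nonneg_left h5 hq0.le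
    have e1 : (∑ v : G.V, ∑ _w : G.V, ‖f v - G.mean f‖ ^ p) = nR * T := by
      have h : ∀ v : G.V, (∑ _w : G.V, ‖f v - G.mean f‖ ^ p) = nR * ‖f v - G.mean f‖ ^ p := by
        intro v
        rw [Finset.sum_const, Finset.card_univ, nsmul_eq_mul, ← hn, ← hnR]
      rw [Finset.sum_congr rfl fun v _ => h v, ← Finset.mul_sum, hT]
    have e2 : (∑ _v : G.V, ∑ w : G.V, ‖f w - G.mean f‖ ^ p) = nR * T := by
      rw [Finset.sum_const, Finset.card_univ, nsmul_eq_mul, ← hn, ← hnR, hT]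
    have hsum2 : (∑ v, ∑ w, ‖f v - f w‖ ^ p) ≤ 2 ^ p * (2 * nR * T) := by
      calc (∑ v, ∑ w, ‖f v - f w‖ ^ p)
          ≤ ∑ v, ∑ w, 2 ^ p * (‖f v - G.mean f‖ ^ p + ‖f w - G.mean f‖ ^ p) :=
            Finset.sum_le_sum fun v _ => Finset.sum_le_sum fun w _ => hterm2 v w
        _ = 2 ^ p * ((∑ v : G.V, ∑ _w : G.V, ‖f v - G.mean f‖ ^ p)
              + (∑ _v : G.V, ∑ w : G.V, ‖f w - G.mean f‖ ^ p)) := by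
            simp only [mul_add, Finset.sum_add_distrib, Finset.mul_sum]
        _ = 2 ^ p * (nR * T + nR * T) := by rw [e1, e2]
        _ = 2 ^ p * (2 * nR * T) := by ring
    calc (∑ v, ∑ w, ((G.dist v w : ℝ)) ^ p)
        ≤ ∑ v, ∑ w, L₂ ^ p * ‖f v - f w‖ ^ p :=
          Finset.sum_le_sum fun v _ => Finset.sum_le_sum fun w _ => hterm1 v w
      _ = L₂ ^ p * ∑ v, ∑ w, ‖f v - f w‖ ^ p := by
          rw [Finset.mul_sum]
          exact Finset.sum_congr rfl fun v _ => by rw [Finset.mul_sum]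
      _ ≤ L₂ ^ p * (2 ^ p * (2 * nR * T)) :=
          mul_le_mul_of_nonneg_left hsum2 (Real.rpow_nonneg hL₂.le p)
  -- assemble the main estimate
  set A : ℝ := ((r₁ : ℝ) + 1) ^ p with hA
  have hS1 : nR * (nR / 2 * A) ≤ ∑ v, ∑ w, ((G.dist v w : ℝ)) ^ p := by
    have h := Finset.sum_le_sum (fun v (_ : v ∈ Finset.univ) => hfar v)
    have heq : (∑ _v : G.V, (nR / 2 * A)) = nR * (nR / 2 * A) := by
      rw [Finset.sum_const, Finset.card_univ, nsmul_eq_mul, ← hn, ← hnR]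
    rw [heq] at h
    exact h
  have h2ε : (0:ℝ) < 2 * ε := by linarith
  have hTle : T ≤ L₁ ^ p * (nR * D) / (2 * ε) := by
    rw [le_div_iff₀ h2ε]
    calc T * (2 * ε) = 2 * ε * T := by ring
      _ ≤ N := hpoin
      _ ≤ L₁ ^ p * (nR * D) := hNle
  have hQ0 : (0:ℝ) < 2 ^ (p+1) * D / ε := by positivity
  set Q : ℝ := 2 ^ (p+1) * D / ε with hQ
  have hAfin : A ≤ (L₁ * L₂) ^ p * Q := by
    have hbig : nR * (nR / 2 * A) ≤ L₂ ^ p * (2 ^ p * (2 * nR * (L₁ ^ p * (nR * D) / (2 * ε)))) := by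
      refine (hS1.trans hSle).trans ?_
      gcongr
    have heqL : L₂ ^ p * (2 ^ p * (2 * nR * (L₁ ^ p * (nR * D) / (2 * ε)))) =
        nR ^ 2 / 2 * ((L₁ * L₂) ^ p * Q) := by
      rw [Real.mul_rpow hL₁.le hL₂.le, hQ, h2p1]
      field_simp
    have heqA : nR * (nR / 2 * A) = nR ^ 2 / 2 * A := by ring
    rw [heqA, heqL] at hbig
    have hpos2 : (0:ℝ) < nR ^ 2 / 2 := by positivity
    exact (mul_le_mul_iff_right₀ hpos2).1 hbig
  set κ : ℝ := (ε / (2 ^ (p+1) * D)) ^ (1/p) with hκ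
  have hκpos : 0 < κ := Real.rpow_pos_of_pos (div_pos hε (by positivity)) _
  have hQκ : Q ^ (1/p) * κ = 1 := by
    have hinv : ε / (2 ^ (p+1) * D) = Q⁻¹ := by
      rw [hQ]
      field_simp
    rw [hκ, hinv, Real.inv_rpow hQ0.le]
    exact mul_inv_cancel₀ (Real.rpow_pos_of_pos hQ0 _).ne'
  have hAB : (r₁ : ℝ) + 1 ≤ (L₁ * L₂) * Q ^ (1/p) := by
    have hL12 : (0:ℝ) < L₁ * L₂ := mul_pos hL₁ hL₂
    apply (Real.rpow_le_rpow_iff (by positivity) (by positivity) hp0).1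
    rw [Real.mul_rpow hL12.le (Real.rpow_nonneg hQ0.le _)]
    have hQQ : (Q ^ (1/p)) ^ p = Q := by
      rw [← Real.rpow_mul hQ0.le, one_div, inv_mul_cancel₀ hp0', Real.rpow_one]
    rw [hQQ]
    exact hAfin
  have hmul : ((r₁ : ℝ) + 1) * κ ≤ L₁ * L₂ := by
    have h := mul_le_mul_of_nonneg_right hAB hκpos.le
    rwa [mul_assoc, hQκ, mul_one] at h
  -- logarithmic comparison of diam and r₁
  set δ : ℝ := ε / (2 ^ p * D) with hδ
  have hδ0 : 0 < δ := div_pos hε (by positivity)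
  have hdb : (1 + δ) ^ G.diam ≤ nR ^ 2 := diam_bound G p hp hε hlam hc hD hD1 hx hn2
  have hlog1 : (G.diam : ℝ) * Real.log (1 + δ) ≤ 2 * Real.log nR := by
    have h := Real.log_le_log (by positivity) hdb
    rw [Real.log_pow, Real.log_pow] at h
    push_cast at h
    linarith
  have hlognR : Real.log nR ≤ ((r₁ : ℝ) + 2) * Real.log ((D:ℝ) + 1) := by
    have hnat : n ≤ (D+1)^(r₁+2) := by
      have h1 : 2 * (D+1)^(r₁+1) ≤ (D+1) * (D+1)^(r₁+1) :=
        Nat.mul_le_mul_right _ (by omega)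
      have h2 : (D+1) * (D+1)^(r₁+1) = (D+1)^(r₁+2) := (pow_succ' _ _).symm
      omega
    have hcast : nR ≤ ((D:ℝ) + 1) ^ (r₁+2) := by
      rw [hnR]
      exact_mod_cast hnat
    calc Real.log nR ≤ Real.log (((D:ℝ) + 1) ^ (r₁+2)) := Real.log_le_log hnR0 hcast
      _ = ((r₁+2 : ℕ) : ℝ) * Real.log ((D:ℝ) + 1) := Real.log_pow _ _
      _ = ((r₁ : ℝ) + 2) * Real.log ((D:ℝ) + 1) := by push_cast; ring
  have hlogD : 0 < Real.log ((D:ℝ) + 1) := by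
    apply Real.log_pos
    have : (1:ℝ) ≤ (D:ℝ) := by exact_mod_cast hD1
    linarith
  have hchain : (G.diam : ℝ) * Real.log (1 + δ) ≤ ((r₁ : ℝ) + 1) * (4 * Real.log ((D:ℝ) + 1)) := by
    have h1 : 2 * Real.log nR ≤ 2 * (((r₁ : ℝ) + 2) * Real.log ((D:ℝ) + 1)) := by linarith
    have h2 : ((r₁ : ℝ) + 2) ≤ 2 * ((r₁ : ℝ) + 1) := by
      have : (0:ℝ) ≤ (r₁ : ℝ) := Nat.cast_nonneg _
      linarith
    nlinarith [hlogD]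
  have hdiam_r : (G.diam : ℝ) * (Real.log (1 + δ) / (4 * Real.log ((D:ℝ) + 1))) ≤ (r₁ : ℝ) + 1 := by
    rw [mul_div_assoc']
    rw [div_le_iff₀ (by positivity)]
    linarith
  -- final computation
  have hCeq : Cconst p ε D * (G.diam : ℝ) =
      κ * ((G.diam : ℝ) * (Real.log (1 + δ) / (4 * Real.log ((D:ℝ) + 1)))) := by
    rw [Cconst, hκ, hδ]
    push_cast
    ring
  calc Cconst p ε D * (G.diam : ℝ)
      = κ * ((G.diam : ℝ) * (Real.log (1 + δ) / (4 * Real.log ((D:ℝ) + 1)))) := hCeq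
    _ ≤ κ * ((r₁ : ℝ) + 1) := mul_le_mul_of_nonneg_left hdiam_r hκpos.le
    _ = ((r₁ : ℝ) + 1) * κ := by ring
    _ ≤ L₁ * L₂ := hmul

lemma lam1_consequences (G : MultiGraph) (p : ℝ) {ε : ℝ} (hε : 0 < ε)
    (hlam : ε ≤ G.lam1 X p) :
    2 ≤ Fintype.card G.V ∧ ∃ x₀ : X, ‖x₀‖ = 1 := by
  have hne : ∃ f : G.V → X, ¬ ∀ v w, f v = f w := by
    by_contra h
    push_neg at h
    have hempty : {r : ℝ | ∃ f : G.V → X, (¬ ∀ v w, f v = f w) ∧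
        r = (∑ v, ∑ w, (G.m v w : ℝ) * ‖f w - f v‖ ^ p) / (∑ v, ‖f v - G.mean f‖ ^ p)}
        = (∅ : Set ℝ) := by
      ext r
      simp only [Set.mem_setOf_eq, Set.mem_empty_iff_false, iff_false]
      rintro ⟨f, hf, -⟩
      exact hf (h f)
    unfold MultiGraph.lam1 at hlam
    rw [hempty, Real.sInf_empty, mul_zero] at hlam
    linarith
  obtain ⟨f, hf⟩ := hne
  push_neg at hf
  obtain ⟨v, w, hvw⟩ := hf
  have hvw' : v ≠ w := fun h => hvw (by rw [h])
  constructor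
  · have : 1 < Fintype.card G.V := Fintype.one_lt_card_iff.2 ⟨v, w, hvw'⟩
    omega
  · have hy : f v - f w ≠ 0 := sub_ne_zero.2 hvw
    refine ⟨‖f v - f w‖⁻¹ • (f v - f w), ?_⟩
    rw [norm_smul, norm_inv, norm_norm, inv_mul_cancel₀ (norm_ne_zero_iff.2 hy)]

lemma one_le_diam (G : MultiGraph) (hc : G.Connected) (hn2 : 2 ≤ Fintype.card G.V) :
    1 ≤ G.diam := by
  obtain ⟨v, w, hvw⟩ := Fintype.exists_pair_of_one_lt_card (by omega : 1 < Fintype.card G.V)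
  have h1 : 1 ≤ G.dist v w := SimpleGraph.Connected.pos_dist_of_ne hc hvw
  exact h1.trans (dist_le_diam G v w)

set_option maxHeartbeats 1000000 in
lemma distortion_set_mem (G : MultiGraph) (hc : G.Connected) (hn2 : 2 ≤ Fintype.card G.V)
    {x₀ : X} (hx : ‖x₀‖ = 1) :
    ((Fintype.card G.V : ℝ) * (G.diam : ℝ)) ∈ {c : ℝ | ∃ (f : G.V → X) (L₁ L₂ : ℝ),
      0 < L₁ ∧ 0 < L₂ ∧ (∀ v w, ‖f v - f w‖ ≤ L₁ * (G.dist v w : ℝ)) ∧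
      (∀ v w, (G.dist v w : ℝ) ≤ L₂ * ‖f v - f w‖) ∧ c = L₁ * L₂} := by
  classical
  set e := Fintype.equivFin G.V with he
  set f : G.V → X := fun v => ((e v : ℕ) : ℝ) • x₀ with hf
  have hnorm : ∀ v w, ‖f v - f w‖ = |((e v : ℕ) : ℝ) - ((e w : ℕ) : ℝ)| := by
    intro v w
    rw [hf]
    simp only []
    rw [← sub_smul, norm_smul, Real.norm_eq_abs, hx, mul_one]
  have hdiam1 : 1 ≤ G.diam := one_le_diam G hc hn2
  have hdiam1R : (1:ℝ) ≤ (G.diam : ℝ) := by exact_mod_cast hdiam1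
  refine ⟨f, (Fintype.card G.V : ℝ), (G.diam : ℝ), ?_, ?_, ?_, ?_, rfl⟩
  · have : 0 < Fintype.card G.V := by omega
    exact_mod_cast this
  · linarith
  · intro v w
    by_cases hvw : v = w
    · subst hvw
      simp [MultiGraph.dist, SimpleGraph.dist_self]
    · have h1 : (1:ℝ) ≤ (G.dist v w : ℝ) := by
        exact_mod_cast SimpleGraph.Connected.pos_dist_of_ne hc hvw
      have h2 : ((e v : ℕ) : ℝ) < (Fintype.card G.V : ℝ) := by
        exact_mod_cast (e v).isLt
      have h3 : ((e w : ℕ) : ℝ) < (Fintype.card G.V : ℝ) := by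
        exact_mod_cast (e w).isLt
      have h4 : (0:ℝ) ≤ ((e v : ℕ) : ℝ) := Nat.cast_nonneg _
      have h5 : (0:ℝ) ≤ ((e w : ℕ) : ℝ) := Nat.cast_nonneg _
      rw [hnorm]
      rw [abs_sub_le_iff]
      constructor <;> nlinarith
  · intro v w
    by_cases hvw : v = w
    · subst hvw
      have : G.dist v v = 0 := SimpleGraph.dist_self
      rw [this, Nat.cast_zero]
      positivity
    · have hij : (e v : ℕ) ≠ (e w : ℕ) := by
        intro h
        exact hvw (e.injective (Fin.ext h))
      have habs : (1:ℝ) ≤ |((e v : ℕ) : ℝ) - ((e w : ℕ) : ℝ)| := by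
        have hz : ((e v : ℕ) : ℤ) - ((e w : ℕ) : ℤ) ≠ 0 := by
          intro h
          apply hij
          omega
        have h1 : (1:ℤ) ≤ |((e v : ℕ) : ℤ) - ((e w : ℕ) : ℤ)| := Int.one_le_abs hz
        have h2 : (((e v : ℕ) : ℤ) : ℝ) - (((e w : ℕ) : ℤ) : ℝ) =
            ((e v : ℕ) : ℝ) - ((e w : ℕ) : ℝ) := by push_cast; ring
        calc (1:ℝ) ≤ |(((e v : ℕ) : ℤ) - ((e w : ℕ) : ℤ) : ℤ)| := by exact_mod_cast h1
          _ = |((e v : ℕ) : ℝ) - ((e w : ℕ) : ℝ)| := by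
              rw [← h2]
              push_cast
              ring_nf
      rw [hnorm]
      have hd : (G.dist v w : ℝ) ≤ (G.diam : ℝ) := by exact_mod_cast dist_le_diam G v w
      calc (G.dist v w : ℝ) ≤ (G.diam : ℝ) := hd
        _ = (G.diam : ℝ) * 1 := (mul_one _).symm
        _ ≤ (G.diam : ℝ) * |((e v : ℕ) : ℝ) - ((e w : ℕ) : ℝ)| := by
            apply mul_le_mul_of_nonneg_left habs (by linarith)

lemma distortion_lower (G : MultiGraph) (p : ℝ) (hp : 1 ≤ p) {ε : ℝ} (hε : 0 < ε)
    (hlam : ε ≤ G.lam1 X p) (hc : G.Connected)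
    {D : ℕ} (hD : ∀ u, G.deg u ≤ D) (hD1 : 1 ≤ D)
    {x₀ : X} (hx : ‖x₀‖ = 1) (hn2 : 2 ≤ Fintype.card G.V) :
    Cconst p ε D * (G.diam : ℝ) ≤ G.distortion X := by
  unfold MultiGraph.distortion
  apply le_csInf
  · exact ⟨_, distortion_set_mem G hc hn2 hx⟩
  · rintro c ⟨f, L₁, L₂, h1, h2, h3, h4, rfl⟩
    exact key_lower G p hp hε hlam hc hD hD1 hx hn2 h1 h2 h3 h4

lemma distortion_upper (G : MultiGraph) (hc : G.Connected) (hn2 : 2 ≤ Fintype.card G.V)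
    {R : ℝ} {x : ℕ → X} (hR1 : 1 < R) (hxR : ∀ k, ‖x k‖ ≤ R)
    (hsep : Pairwise fun k l => 1 ≤ ‖x k - x l‖) :
    G.distortion X ≤ (2 * R) * (G.diam : ℝ) := by
  classical
  set e := Fintype.equivFin G.V with he
  set f : G.V → X := fun v => (G.diam : ℝ) • x (e v) with hf
  have hdiam1 : 1 ≤ G.diam := one_le_diam G hc hn2
  have hdiam1R : (1:ℝ) ≤ (G.diam : ℝ) := by exact_mod_cast hdiam1
  have hnorm : ∀ v w, ‖f v - f w‖ = (G.diam : ℝ) * ‖x (e v) - x (e w)‖ := by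
    intro v w
    rw [hf]
    simp only []
    rw [← smul_sub, norm_smul, Real.norm_eq_abs, abs_of_nonneg (by linarith)]
  have hmem : ((2 * R * (G.diam : ℝ)) * 1) ∈ {c : ℝ | ∃ (f : G.V → X) (L₁ L₂ : ℝ),
      0 < L₁ ∧ 0 < L₂ ∧ (∀ v w, ‖f v - f w‖ ≤ L₁ * (G.dist v w : ℝ)) ∧
      (∀ v w, (G.dist v w : ℝ) ≤ L₂ * ‖f v - f w‖) ∧ c = L₁ * L₂} := by
    refine ⟨f, 2 * R * (G.diam : ℝ), 1, by nlinarith, one_pos, ?_, ?_, rfl⟩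
    · intro v w
      by_cases hvw : v = w
      · subst hvw
        simp [MultiGraph.dist, SimpleGraph.dist_self]
      · have h1 : (1:ℝ) ≤ (G.dist v w : ℝ) := by
          exact_mod_cast SimpleGraph.Connected.pos_dist_of_ne hc hvw
        have h2 : ‖x (e v) - x (e w)‖ ≤ 2 * R := by
          calc ‖x (e v) - x (e w)‖ ≤ ‖x (e v)‖ + ‖x (e w)‖ := norm_sub_le _ _
            _ ≤ R + R := add_le_add (hxR _) (hxR _)
            _ = 2 * R := by ring
        rw [hnorm]
        have hR0 : (0:ℝ) < R := by linarith
        have h6 : (G.diam:ℝ) * ‖x (e v) - x (e w)‖ ≤ (G.diam:ℝ) * (2*R) :=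
          mul_le_mul_of_nonneg_left h2 (by linarith)
        have h7 : (2*R*(G.diam:ℝ)) * 1 ≤ (2*R*(G.diam:ℝ)) * (G.dist v w : ℝ) :=
          mul_le_mul_of_nonneg_left h1 (by positivity)
        nlinarith [h6, h7]
    · intro v w
      by_cases hvw : v = w
      · subst hvw
        have : G.dist v v = 0 := SimpleGraph.dist_self
        rw [this, Nat.cast_zero]
        positivity
      · have hij : e v ≠ e w := fun h => hvw (e.injective h)
        have hsep1 : (1:ℝ) ≤ ‖x (e v) - x (e w)‖ := hsep (fun h => hij (Fin.ext (by omega)))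
        rw [hnorm, one_mul]
        have hd : (G.dist v w : ℝ) ≤ (G.diam : ℝ) := by exact_mod_cast dist_le_diam G v w
        calc (G.dist v w : ℝ) ≤ (G.diam : ℝ) := hd
          _ = (G.diam : ℝ) * 1 := (mul_one _).symm
          _ ≤ (G.diam : ℝ) * ‖x (e v) - x (e w)‖ := by
              apply mul_le_mul_of_nonneg_left hsep1 (by linarith)
  have hbdd : BddBelow {c : ℝ | ∃ (f : G.V → X) (L₁ L₂ : ℝ),
      0 < L₁ ∧ 0 < L₂ ∧ (∀ v w, ‖f v - f w‖ ≤ L₁ * (G.dist v w : ℝ)) ∧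
      (∀ v w, (G.dist v w : ℝ) ≤ L₂ * ‖f v - f w‖) ∧ c = L₁ * L₂} := by
    refine ⟨0, ?_⟩
    rintro c ⟨f, L₁, L₂, h1, h2, -, -, rfl⟩
    positivity
  have := csInf_le hbdd hmem
  unfold MultiGraph.distortion
  calc sInf _ ≤ (2 * R * (G.diam : ℝ)) * 1 := this
    _ = (2 * R) * (G.diam : ℝ) := by ring

end AndersAux

theorem anders_distortion_order_diam
    (X : Type*) [NormedAddCommGroup X] [NormedSpace ℝ X] [CompleteSpace X]
    (p : ℝ) (hp : 1 ≤ p) (G : ℕ → MultiGraph) (hconn : ∀ n, (G n).Connected)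
    (hand : IsAnderFamily G X p) :
    (∃ c : ℝ, 0 < c ∧ ∀ n, c * ((G n).diam : ℝ) ≤ (G n).distortion X) ∧
    (¬ FiniteDimensional ℝ X → ∃ c C : ℝ, 0 < c ∧ 0 < C ∧
      ∀ n, c * ((G n).diam : ℝ) ≤ (G n).distortion X ∧
        (G n).distortion X ≤ C * ((G n).diam : ℝ)) := by
  obtain ⟨⟨D₀, hD₀⟩, _hdiam, ε, hε, hlam⟩ := hand
  set D := max D₀ 1 with hD
  have hD1 : 1 ≤ D := le_max_right _ _
  have hDdeg : ∀ n, ∀ u, (G n).deg u ≤ D := fun n u =>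
    le_trans (le_trans (Finset.le_sup (Finset.mem_univ u)) (hD₀ n)) (le_max_left _ _)
  have hlower : ∀ n, AndersAux.Cconst p ε D * ((G n).diam : ℝ) ≤ (G n).distortion X := by
    intro n
    obtain ⟨hn2, x₀, hx⟩ := AndersAux.lam1_consequences (G n) p hε (hlam n)
    exact AndersAux.distortion_lower (G n) p hp hε (hlam n) (hconn n) (hDdeg n) hD1 hx hn2
  have hcpos : 0 < AndersAux.Cconst p ε D := AndersAux.Cconst_pos hp hε hD1
  refine ⟨⟨AndersAux.Cconst p ε D, hcpos, hlower⟩, ?_⟩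
  intro hfd
  obtain ⟨R, x, hR1, hxR, hsep⟩ := exists_seq_norm_le_one_le_norm_sub (𝕜 := ℝ) (E := X) hfd
  refine ⟨AndersAux.Cconst p ε D, 2 * R, hcpos, by linarith, fun n => ⟨hlower n, ?_⟩⟩
  obtain ⟨hn2, x₀, hx⟩ := AndersAux.lam1_consequences (G n) p hε (hlam n)
  exact AndersAux.distortion_upper (G n) (hconn n) hn2 hR1 hxR hsep
end
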